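/- arXiv:2107.11335 — 5 statements merged into one kernel-verified Lean document; each statement's English description precedes it below -/
import Mathlib

section
/- Let Γ and Λ be countable discrete groups acting on a σ-finite measure space (Ω, m) by commuting measure-preserving measurable actions, and let Y ⊆ Ω be a measurable fundamental domain for the Λ-action with 0 < m(Y) < ∞. If φ : Λ → ℂ is a Herz-Schur multiplier on Λ, then the induced function φ̂ : Γ → ℂ, φ̂(γ) = (1/m(Y)) Σ_{s∈Λ} φ(s) m(γ(sY) ∩ Y), is a Herz-Schur multiplier on Γ and ‖φ̂‖_{B₂(Γ)} ≤ ‖φ‖_{B₂(Λ)}. -/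
open MeasureTheory Filter
open scoped Pointwise ENNReal

/-- The set of bounds `A * B` achievable by Herz-Schur representations
`φ(t⁻¹s) = ⟨ξ(s), η(t)⟩` of a function `φ` on a group `G`. -/
def B2BoundSet {G : Type*} [Group G] (φ : G → ℂ) : Set ℝ :=
  {C | ∃ (H : Type) (_ : NormedAddCommGroup H) (_ : InnerProductSpace ℂ H)
      (ξ η : G → H) (A B : ℝ),
      (∀ s, ‖ξ s‖ ≤ A) ∧ (∀ t, ‖η t‖ ≤ B) ∧ C = A * B ∧
      ∀ s t : G, φ (t⁻¹ * s) = (inner ℂ (η t) (ξ s) : ℂ)}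

/-- `φ` is a Herz-Schur multiplier if it admits a Herz-Schur representation. -/
def IsHerzSchurMultiplier {G : Type*} [Group G] (φ : G → ℂ) : Prop :=
  (B2BoundSet φ).Nonempty

/-- The Herz-Schur (completely bounded multiplier) norm `‖φ‖_{B₂(G)}`. -/
noncomputable def B2Norm {G : Type*} [Group G] (φ : G → ℂ) : ℝ :=
  sInf (B2BoundSet φ)

/-- The function `φ̂(γ) = (1/m(Y)) Σ_{s∈Λ} φ(s) m(γ(sY) ∩ Y)` induced from `φ : Λ → ℂ`. -/
noncomputable def inducedMultiplier {Ω : Type*} [MeasurableSpace Ω] (m : Measure Ω)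
    {Γ Λ : Type*} [Group Γ] [Group Λ] [MulAction Γ Ω] [MulAction Λ Ω]
    (Y : Set Ω) (φ : Λ → ℂ) (γ : Γ) : ℂ :=
  ((m Y).toReal)⁻¹ * ∑' s : Λ, φ s * ((m ((γ • (s • Y)) ∩ Y)).toReal : ℂ)


section Aux
open MeasureTheory Filter Set
open scoped Pointwise ENNReal

private theorem sm_comp' {Ω β : Type*} [MeasurableSpace Ω] [TopologicalSpace β]
    [TopologicalSpace.PseudoMetrizableSpace β]
    (h : ℕ → β) {e : Ω → ℕ} (he : Measurable e) :
    StronglyMeasurable (fun x => h (e x)) := by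
  letI : MeasurableSpace β := borel β
  haveI : BorelSpace β := ⟨rfl⟩
  rw [stronglyMeasurable_iff_measurable_separable]
  refine ⟨(measurable_from_top (f := h)).comp he, ?_⟩
  exact ((Set.countable_range h).isSeparable).mono (Set.range_comp_subset_range _ _)

theorem key_mem
    {Ω : Type*} [MeasurableSpace Ω] (m : Measure Ω)
    {Γ Λ : Type*} [Group Γ] [Countable Γ] [Group Λ] [Countable Λ]
    [MulAction Γ Ω] [MulAction Λ Ω]
    (hΓ : ∀ γ : Γ, MeasurePreserving (fun ω => γ • ω) m m)
    (hΛ : ∀ s : Λ, MeasurePreserving (fun ω => s • ω) m m)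
    (hcomm : ∀ (γ : Γ) (s : Λ) (ω : Ω), γ • s • ω = s • γ • ω)
    (Y : Set Ω) (hY : IsFundamentalDomain Λ Y m)
    (hYpos : 0 < m Y) (hYfin : m Y < ⊤)
    (φ : Λ → ℂ) {C : ℝ}
    (hC : ∃ (H : Type) (_ : NormedAddCommGroup H) (_ : InnerProductSpace ℂ H)
      (ξ η : Λ → H) (A B : ℝ),
      (∀ s, ‖ξ s‖ ≤ A) ∧ (∀ t, ‖η t‖ ≤ B) ∧ C = A * B ∧
      ∀ s t : Λ, φ (t⁻¹ * s) = (inner ℂ (η t) (ξ s) : ℂ)) :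
    ∃ (H : Type) (_ : NormedAddCommGroup H) (_ : InnerProductSpace ℂ H)
      (ξ η : Γ → H) (A B : ℝ),
      (∀ s, ‖ξ s‖ ≤ A) ∧ (∀ t, ‖η t‖ ≤ B) ∧ C = A * B ∧
      ∀ s t : Γ, (((m Y).toReal)⁻¹ *
          ∑' u : Λ, φ u * ((m (((t⁻¹ * s) • (u • Y)) ∩ Y)).toReal : ℂ) : ℂ)
        = (inner ℂ (η t) (ξ s) : ℂ) := by
  classical
  obtain ⟨H, _, _, ξ, η, A, B, hA, hB, hCeq, hrep⟩ := hC
  haveI : Encodable Λ := Encodable.ofCountable Λ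
  letI : MeasurableSpace Λ := ⊤
  haveI : MeasurableConstSMul Λ Ω := ⟨fun c => (hΛ c).measurable⟩
  haveI : MeasurableSMul Λ Ω := ⟨fun _ => measurable_from_top⟩
  haveI : SMulInvariantMeasure Λ Ω m := ⟨fun c _ hs => (hΛ c).measure_preimage hs.nullMeasurableSet⟩
  obtain ⟨f, hf⟩ := exists_surjective_nat Γ
  -- the measurable fundamental domain Y'
  set Y' : Set Ω := toMeasurable m Y with hY'def
  have hY'meas : MeasurableSet Y' := measurableSet_toMeasurable m Y
  have hYae : Y' =ᵐ[m] Y := hY.nullMeasurableSet.toMeasurable_ae_eq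
  have hmY' : m Y' = m Y := measure_toMeasurable Y
  -- basic smul set facts
  have hsmulΛ : ∀ (s : Λ) (Z : Set Ω) (x : Ω), x ∈ s • Z ↔ s⁻¹ • x ∈ Z := fun s Z x =>
    Set.mem_smul_set_iff_inv_smul_mem
  have hsmulΓ : ∀ (γ : Γ) (Z : Set Ω) (x : Ω), x ∈ γ • Z ↔ γ⁻¹ • x ∈ Z := fun γ Z x =>
    Set.mem_smul_set_iff_inv_smul_mem
  have hpreΛ : ∀ (s : Λ) (Z : Set Ω), s • Z = (fun x => s⁻¹ • x) ⁻¹' Z := by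
    intro s Z; ext x; exact hsmulΛ s Z x
  have hpreΓ : ∀ (γ : Γ) (Z : Set Ω), γ • Z = (fun x => γ⁻¹ • x) ⁻¹' Z := by
    intro γ Z; ext x; exact hsmulΓ γ Z x
  have hmeasΛsmul : ∀ (s : Λ) {Z : Set Ω}, MeasurableSet Z → MeasurableSet (s • Z) := by
    intro s Z hZ; rw [hpreΛ]; exact hZ.preimage (hΛ s⁻¹).measurable
  have hmeasΓsmul : ∀ (γ : Γ) {Z : Set Ω}, MeasurableSet Z → MeasurableSet (γ • Z) := by
    intro γ Z hZ; rw [hpreΓ]; exact hZ.preimage (hΓ γ⁻¹).measurable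
  have hmΛsmul : ∀ (s : Λ) {Z : Set Ω}, NullMeasurableSet Z m → m (s • Z) = m Z := by
    intro s Z hZ; rw [hpreΛ]; exact (hΛ s⁻¹).measure_preimage hZ
  have hmΓsmul : ∀ (γ : Γ) {Z : Set Ω}, NullMeasurableSet Z m → m (γ • Z) = m Z := by
    intro γ Z hZ; rw [hpreΓ]; exact (hΓ γ⁻¹).measure_preimage hZ
  have haesmulΛ : ∀ (s : Λ) {Z Z' : Set Ω}, Z =ᵐ[m] Z' → (s • Z : Set Ω) =ᵐ[m] (s • Z' : Set Ω) :=
    fun s {Z Z'} h => Measure.QuasiMeasurePreserving.smul_ae_eq_of_ae_eq s (hΛ s⁻¹).quasiMeasurePreserving h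
  have haesmulΓ : ∀ (γ : Γ) {Z Z' : Set Ω}, Z =ᵐ[m] Z' → (γ • Z : Set Ω) =ᵐ[m] (γ • Z' : Set Ω) :=
    fun γ {Z Z'} h => Measure.QuasiMeasurePreserving.smul_ae_eq_of_ae_eq γ (hΓ γ⁻¹).quasiMeasurePreserving h
  -- Y' is a fundamental domain
  have hFD' : IsFundamentalDomain Λ Y' m := by
    refine ⟨hY'meas.nullMeasurableSet, ?_, ?_⟩
    · filter_upwards [hY.ae_covers] with x hx
      obtain ⟨g, hg⟩ := hx
      exact ⟨g, subset_toMeasurable m Y hg⟩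
    · intro u v huv
      have h1 : (u • Y' : Set Ω) =ᵐ[m] (u • Y : Set Ω) := haesmulΛ u hYae
      have h2 : (v • Y' : Set Ω) =ᵐ[m] (v • Y : Set Ω) := haesmulΛ v hYae
      have := hY.aedisjoint huv
      unfold AEDisjoint at *
      calc m ((u • Y') ∩ (v • Y')) = m ((u • Y) ∩ (v • Y)) :=
            measure_congr (MeasureTheory.ae_eq_set_inter h1 h2)
        _ = 0 := this
  -- the good set
  set Good : Set Ω := {x | ∃! s : Λ, x ∈ s • Y'} with hGooddef
  have hGoodmeas : MeasurableSet Good := by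
    have : Good = (⋃ s : Λ, s • Y') ∩
        ⋂ (s : Λ) (t : Λ) (_ : s ≠ t), ((s • Y') ∩ (t • Y'))ᶜ := by
      ext x
      simp only [hGooddef, Set.mem_setOf_eq, Set.mem_inter_iff, Set.mem_iUnion, Set.mem_iInter,
        Set.mem_compl_iff, Set.mem_inter_iff, not_and]
      constructor
      · rintro ⟨s, hs, huniq⟩
        refine ⟨⟨s, hs⟩, fun a b hab ha hb => hab ?_⟩
        rw [huniq a ha, huniq b hb]
      · rintro ⟨⟨s, hs⟩, hdisj⟩
        refine ⟨s, hs, fun b hb => ?_⟩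
        by_contra hbs
        exact hdisj b s hbs hb hs
    rw [this]
    exact (MeasurableSet.iUnion fun s => hmeasΛsmul s hY'meas).inter
      (MeasurableSet.iInter fun s => MeasurableSet.iInter fun t => MeasurableSet.iInter fun _ =>
        ((hmeasΛsmul s hY'meas).inter (hmeasΛsmul t hY'meas)).compl)
  set c : Ω → Λ := fun x => if h : ∃! s : Λ, x ∈ s • Y' then h.choose else 1 with hcdef
  have hc_mem : ∀ x ∈ Good, x ∈ c x • Y' := by
    intro x hx
    have hx' : ∃! s : Λ, x ∈ s • Y' := hx
    have : c x = hx'.choose := by simp only [hcdef]; rw [dif_pos hx']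
    rw [this]
    exact hx'.choose_spec.1
  have hc_eq : ∀ x ∈ Good, ∀ u : Λ, x ∈ u • Y' → c x = u := by
    intro x hx u hu
    have hx' : ∃! s : Λ, x ∈ s • Y' := hx
    have : c x = hx'.choose := by simp only [hcdef]; rw [dif_pos hx']
    rw [this]
    exact (hx'.choose_spec.2 u hu).symm
  have hGood_smul : ∀ (v : Λ) (x : Ω), x ∈ Good → (v • x ∈ Good ∧ c (v • x) = v * c x) := by
    intro v x hx
    have hmem : v • x ∈ (v * c x) • Y' := by
      rw [hsmulΛ]
      have := hc_mem x hx
      rw [hsmulΛ] at this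
      rwa [mul_inv_rev, mul_smul, inv_smul_smul]
    have huniq : ∀ u : Λ, v • x ∈ u • Y' → u = v * c x := by
      intro u hu
      rw [hsmulΛ] at hu
      have : x ∈ (v⁻¹ * u) • Y' := by
        rw [hsmulΛ, mul_inv_rev, inv_inv, mul_smul]
        exact hu
      have := hc_eq x hx _ this
      rw [this]; group
    have hgood : v • x ∈ Good := ⟨v * c x, hmem, huniq⟩
    exact ⟨hgood, hc_eq _ hgood _ hmem⟩
  have hGood_conull : m Goodᶜ = 0 := by
    have hsub : Goodᶜ ⊆ (⋃ s : Λ, s • Y')ᶜ ∪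
        ⋃ (p : Λ × Λ) (_ : p.1 ≠ p.2), ((p.1 • Y') ∩ (p.2 • Y')) := by
      intro x hx
      by_cases hcov : x ∈ ⋃ s : Λ, s • Y'
      · right
        obtain ⟨s, hs⟩ := Set.mem_iUnion.1 hcov
        have : ¬∀ u : Λ, x ∈ u • Y' → u = s := by
          intro hall
          exact hx ⟨s, hs, hall⟩
        push_neg at this
        obtain ⟨u, hu, hus⟩ := this
        exact Set.mem_iUnion.2 ⟨(u, s), Set.mem_iUnion.2 ⟨hus, hu, hs⟩⟩
      · exact Or.inl hcov
    refine measure_mono_null hsub (measure_union_null ?_ ?_)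
    · have := hFD'.ae_covers
      rw [MeasureTheory.ae_iff] at this
      convert this using 1
      congr 1
      ext x
      simp only [Set.mem_compl_iff, Set.mem_iUnion, Set.mem_setOf_eq, not_exists]
      constructor
      · intro h g hg
        exact h g⁻¹ (by rw [hsmulΛ, inv_inv]; exact hg)
      · intro h s hs
        rw [hsmulΛ] at hs
        exact h s⁻¹ hs
    · refine measure_iUnion_null fun p => ?_
      by_cases hp : p.1 = p.2
      · simp [hp]
      · have : (⋃ (_ : p.1 ≠ p.2), (p.1 • Y') ∩ (p.2 • Y')) = (p.1 • Y') ∩ (p.2 • Y') := by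
          simp [hp]
        rw [this]
        exact hFD'.aedisjoint hp
  have hGood_ae : ∀ᵐ x ∂m, x ∈ Good := by
    rw [MeasureTheory.ae_iff]
    exact hGood_conull
  have hGood_ae_pre : ∀ γ : Γ, ∀ᵐ x ∂m, γ⁻¹ • x ∈ Good := by
    intro γ
    rw [MeasureTheory.ae_iff]
    have : {x | ¬ γ⁻¹ • x ∈ Good} = (fun x => γ⁻¹ • x) ⁻¹' Goodᶜ := rfl
    rw [this]
    exact (hΓ γ⁻¹).quasiMeasurePreserving.preimage_null hGood_conull
  -- encoding
  set e : Ω → ℕ := fun x => Encodable.encode (c x) with hedef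
  set decΛ : ℕ → Λ := fun n => (Encodable.decode (α := Λ) n).getD 1 with hdecdef
  have hdec : ∀ y, decΛ (e y) = c y := by
    intro y; simp [hdecdef, hedef, Encodable.encodek]
  have hcfib : ∀ u : Λ, MeasurableSet {x | c x = u} := by
    intro u
    have : {x | c x = u} = (Good ∩ u • Y') ∪ (if u = 1 then Goodᶜ else ∅) := by
      ext x
      simp only [Set.mem_setOf_eq, Set.mem_union, Set.mem_inter_iff]
      constructor
      · intro hcx
        by_cases hx : x ∈ Good
        · exact Or.inl ⟨hx, hcx ▸ hc_mem x hx⟩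
        · have : c x = 1 := by
            have hx' : ¬ ∃! s : Λ, x ∈ s • Y' := hx
            simp only [hcdef]; rw [dif_neg hx']
          rw [this] at hcx
          right
          rw [if_pos hcx.symm]
          exact hx
      · rintro (⟨hx, hmem⟩ | hbad)
        · exact hc_eq x hx u hmem
        · by_cases hu : u = 1
          · rw [if_pos hu] at hbad
            have hx' : ¬ ∃! s : Λ, x ∈ s • Y' := hbad
            simp only [hcdef]; rw [dif_neg hx', hu]
          · rw [if_neg hu] at hbad; exact absurd hbad (Set.notMem_empty x)
    rw [this]
    refine (hGoodmeas.inter (hmeasΛsmul u hY'meas)).union ?_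
    split <;> simp [hGoodmeas.compl]
  have he_meas : Measurable e := by
    apply measurable_to_countable'
    intro n
    have : e ⁻¹' {n} = ⋃ (u : Λ) (_ : Encodable.encode u = n), {x | c x = u} := by
      ext x
      simp only [Set.mem_preimage, Set.mem_singleton_iff, Set.mem_iUnion, Set.mem_setOf_eq, hedef]
      constructor
      · intro h; exact ⟨c x, h, rfl⟩
      · rintro ⟨u, hn, hc⟩; rw [hc, hn]
    rw [this]
    exact MeasurableSet.iUnion fun u => MeasurableSet.iUnion fun _ => hcfib u
  -- the push-forward space
  set nΓ : Γ → ℕ := fun γ => (hf γ).choose with hnΓdef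
  have hnΓ : ∀ γ, f (nΓ γ) = γ := fun γ => (hf γ).choose_spec
  set Φ : Ω → (ℕ → ℕ) := fun x n => e ((f n)⁻¹ • x) with hΦdef
  have hΦmeas : Measurable Φ :=
    measurable_pi_iff.2 fun n => he_meas.comp (hΓ (f n)⁻¹).measurable
  set μ : Measure (ℕ → ℕ) := (m.restrict Y').map Φ with hμdef
  have hμuniv : μ Set.univ = m Y := by
    rw [hμdef, Measure.map_apply hΦmeas MeasurableSet.univ, Set.preimage_univ,
      Measure.restrict_apply_univ, hmY']
  haveI : IsFiniteMeasure μ := ⟨by rw [hμuniv]; exact hYfin⟩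
  -- the vector-valued functions
  set gξ : Γ → (ℕ → ℕ) → H := fun γ ω => ξ (decΛ (ω (nΓ γ))) with hgξdef
  set gη : Γ → (ℕ → ℕ) → H := fun γ ω => η (decΛ (ω (nΓ γ))) with hgηdef
  have hgξΦ : ∀ (γ : Γ) (x : Ω), gξ γ (Φ x) = ξ (c (γ⁻¹ • x)) := by
    intro γ x; simp only [hgξdef, hΦdef, hdec, hnΓ]
  have hgηΦ : ∀ (γ : Γ) (x : Ω), gη γ (Φ x) = η (c (γ⁻¹ • x)) := by
    intro γ x; simp only [hgηdef, hΦdef, hdec, hnΓ]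
  have hgξsm : ∀ γ : Γ, StronglyMeasurable (gξ γ) := fun γ =>
    sm_comp' (fun k => ξ (decΛ k)) (measurable_pi_apply (nΓ γ))
  have hgηsm : ∀ γ : Γ, StronglyMeasurable (gη γ) := fun γ =>
    sm_comp' (fun k => η (decΛ k)) (measurable_pi_apply (nΓ γ))
  have hA0 : 0 ≤ A := (norm_nonneg _).trans (hA 1)
  have hB0 : 0 ≤ B := (norm_nonneg _).trans (hB 1)
  have hgξmem : ∀ γ : Γ, MemLp (gξ γ) 2 μ := fun γ =>
    MemLp.of_bound (hgξsm γ).aestronglyMeasurable A (Eventually.of_forall fun ω => hA _)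
  have hgηmem : ∀ γ : Γ, MemLp (gη γ) 2 μ := fun γ =>
    MemLp.of_bound (hgηsm γ).aestronglyMeasurable B (Eventually.of_forall fun ω => hB _)
  -- normalization
  set r : ℝ := Real.sqrt (m Y).toReal with hrdef
  have hmYtop : (m Y).toReal ≠ 0 := (ENNReal.toReal_pos hYpos.ne' hYfin.ne).ne'
  have hmYt0 : 0 < (m Y).toReal := ENNReal.toReal_pos hYpos.ne' hYfin.ne
  have hrpos : 0 < r := Real.sqrt_pos.2 hmYt0
  have hr2 : r * r = (m Y).toReal := Real.mul_self_sqrt hmYt0.le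
  -- norm bound for toLp elements
  have hnorm : ∀ (g : (ℕ → ℕ) → H) (hg : MemLp g 2 μ) (D : ℝ), 0 ≤ D →
      (∀ ω, ‖g ω‖ ≤ D) → ‖hg.toLp g‖ ≤ r * D := by
    intro g hg D hD0 hgD
    rw [Lp.norm_toLp]
    have h1 : eLpNorm g 2 μ ≤ μ Set.univ ^ ((2 : ℝ≥0∞).toReal)⁻¹ * ENNReal.ofReal D :=
      eLpNorm_le_of_ae_bound (Eventually.of_forall hgD)
    have h2 : (μ Set.univ ^ ((2 : ℝ≥0∞).toReal)⁻¹ * ENNReal.ofReal D).toReal = r * D := by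
      rw [ENNReal.toReal_mul, ← ENNReal.toReal_rpow, hμuniv, ENNReal.toReal_ofReal hD0]
      congr 1
      rw [hrdef, Real.sqrt_eq_rpow]
      norm_num
    calc (eLpNorm g 2 μ).toReal ≤ (μ Set.univ ^ ((2 : ℝ≥0∞).toReal)⁻¹ * ENNReal.ofReal D).toReal := by
          apply ENNReal.toReal_mono _ h1
          exact ENNReal.mul_ne_top (ENNReal.rpow_ne_top_of_nonneg (by norm_num) (by rw [hμuniv]; exact hYfin.ne)) ENNReal.ofReal_ne_top
      _ = r * D := h2
  set ξv : Γ → Lp H 2 μ := fun γ => ((r : ℂ))⁻¹ • ((hgξmem γ).toLp (gξ γ)) with hξvdef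
  set ηv : Γ → Lp H 2 μ := fun γ => ((r : ℂ))⁻¹ • ((hgηmem γ).toLp (gη γ)) with hηvdef
  have hξvnorm : ∀ γ, ‖ξv γ‖ ≤ A := by
    intro γ
    rw [hξvdef]
    simp only [norm_smul]
    have h1 : ‖((r : ℂ))⁻¹‖ = r⁻¹ := by
      rw [norm_inv, Complex.norm_real, Real.norm_of_nonneg hrpos.le]
    rw [h1]
    calc r⁻¹ * ‖(hgξmem γ).toLp (gξ γ)‖ ≤ r⁻¹ * (r * A) := by
          apply mul_le_mul_of_nonneg_left (hnorm _ _ A hA0 fun ω => hA _) (inv_nonneg.2 hrpos.le)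
      _ = A := by field_simp
  have hηvnorm : ∀ γ, ‖ηv γ‖ ≤ B := by
    intro γ
    rw [hηvdef]
    simp only [norm_smul]
    have h1 : ‖((r : ℂ))⁻¹‖ = r⁻¹ := by
      rw [norm_inv, Complex.norm_real, Real.norm_of_nonneg hrpos.le]
    rw [h1]
    calc r⁻¹ * ‖(hgηmem γ).toLp (gη γ)‖ ≤ r⁻¹ * (r * B) := by
          apply mul_le_mul_of_nonneg_left (hnorm _ _ B hB0 fun ω => hB _) (inv_nonneg.2 hrpos.le)
      _ = B := by field_simp
  refine ⟨Lp H 2 μ, inferInstance, inferInstance, ξv, ηv, A, B, hξvnorm, hηvnorm, hCeq, ?_⟩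
  intro s t
  set γ : Γ := t⁻¹ * s with hγdef
  -- (a) rescale
  have ha : (inner ℂ (ηv t) (ξv s) : ℂ) =
      (((m Y).toReal : ℂ))⁻¹ *
        (inner ℂ ((hgηmem t).toLp (gη t)) ((hgξmem s).toLp (gξ s)) : ℂ) := by
    rw [hξvdef, hηvdef]
    simp only
    rw [inner_smul_left, inner_smul_right, map_inv₀, Complex.conj_ofReal]
    rw [← mul_assoc, ← mul_inv]
    norm_cast
    rw [hr2]
  -- (b) inner as integral over μ
  have hb : (inner ℂ ((hgηmem t).toLp (gη t)) ((hgξmem s).toLp (gξ s)) : ℂ)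
      = ∫ ω, (inner ℂ (gη t ω) (gξ s ω) : ℂ) ∂μ := by
    rw [L2.inner_def]
    apply integral_congr_ae
    filter_upwards [(hgηmem t).coeFn_toLp, (hgξmem s).coeFn_toLp] with ω h1 h2
    rw [h1, h2]
  -- (c) pull back to Ω
  have hc' : (∫ ω, (inner ℂ (gη t ω) (gξ s ω) : ℂ) ∂μ)
      = ∫ x in Y', (inner ℂ (η (c (t⁻¹ • x))) (ξ (c (s⁻¹ • x))) : ℂ) ∂m := by
    rw [hμdef, integral_map hΦmeas.aemeasurable
      ((hgηsm t).aestronglyMeasurable.inner (hgξsm s).aestronglyMeasurable)]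
    apply integral_congr_ae
    apply Eventually.of_forall
    intro x
    simp only [hgηΦ, hgξΦ]
  -- (d) use the representation
  have hd : (∫ x in Y', (inner ℂ (η (c (t⁻¹ • x))) (ξ (c (s⁻¹ • x))) : ℂ) ∂m)
      = ∫ x in Y', φ ((c (t⁻¹ • x))⁻¹ * c (s⁻¹ • x)) ∂m := by
    apply integral_congr_ae
    apply Eventually.of_forall
    intro x
    exact (hrep _ _).symm
  -- the invariant function F
  set F : Ω → ℂ := fun z => if z ∈ Good then φ (c (γ⁻¹ • ((c z)⁻¹ • z))) else 0 with hFdef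
  have hFinv : ∀ (v : Λ) (z : Ω), F (v • z) = F z := by
    intro v z
    by_cases hz : z ∈ Good
    · obtain ⟨hgood, hcvz⟩ := hGood_smul v z hz
      have harg : (v * c z)⁻¹ • (v • z) = (c z)⁻¹ • z := by
        rw [mul_inv_rev, mul_smul, inv_smul_smul]
      simp only [hFdef, if_pos hgood, if_pos hz, hcvz, harg]
    · have hz2 : v • z ∉ Good := by
        intro hcon
        have := (hGood_smul v⁻¹ _ hcon).1
        rw [inv_smul_smul] at this
        exact hz this
      simp only [hFdef, if_neg hz, if_neg hz2]
  -- (e1)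
  have he1 : (∫ x in Y', φ ((c (t⁻¹ • x))⁻¹ * c (s⁻¹ • x)) ∂m)
      = ∫ x in Y', F (t⁻¹ • x) ∂m := by
    apply integral_congr_ae
    filter_upwards [ae_restrict_of_ae (hGood_ae_pre t), ae_restrict_of_ae (hGood_ae_pre s)]
      with x h1x h2x
    have hkey : γ⁻¹ • ((c (t⁻¹ • x))⁻¹ • (t⁻¹ • x)) = (c (t⁻¹ • x))⁻¹ • (s⁻¹ • x) := by
      rw [hγdef]
      have h5 : (t⁻¹ * s)⁻¹ • ((c (t⁻¹ • x))⁻¹ • (t⁻¹ • x))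
          = s⁻¹ • (t • ((c (t⁻¹ • x))⁻¹ • (t⁻¹ • x))) := by
        rw [mul_inv_rev, inv_inv, mul_smul]
      rw [h5, hcomm t _ _, smul_inv_smul, hcomm s⁻¹ _ _]
    simp only [hFdef, if_pos h1x, hkey]
    rw [(hGood_smul _ _ h2x).2]
  -- (e2) change of variables
  have hembΓ : ∀ γ0 : Γ, MeasurableEmbedding (fun x : Ω => γ0 • x) := fun γ0 =>
    (MeasurableEquiv.mk (MulAction.toPerm γ0) ((hΓ γ0).measurable)
      ((hΓ γ0⁻¹).measurable)).measurableEmbedding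
  have he2 : (∫ x in Y', F (t⁻¹ • x) ∂m) = ∫ x in (t⁻¹ • Y' : Set Ω), F x ∂m := by
    have hpre : (fun x : Ω => t⁻¹ • x) ⁻¹' (t⁻¹ • Y' : Set Ω) = Y' := by
      ext x
      simp only [Set.mem_preimage]
      rw [hsmulΓ, inv_inv, smul_inv_smul]
    have := (hΓ t⁻¹).setIntegral_preimage_emb (hembΓ t⁻¹) F (t⁻¹ • Y' : Set Ω)
    rwa [hpre] at this
  -- (e3) t⁻¹ • Y' is a fundamental domain
  have hsetcomm : ∀ (v : Λ) (γ0 : Γ) (Z : Set Ω), v • (γ0 • Z) = γ0 • (v • Z) := by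
    intro v γ0 Z
    ext x
    rw [hsmulΛ, hsmulΓ, hsmulΓ, hsmulΛ, hcomm]
  have hFDt : IsFundamentalDomain Λ (t⁻¹ • Y' : Set Ω) m := by
    refine ⟨(hmeasΓsmul t⁻¹ hY'meas).nullMeasurableSet, ?_, ?_⟩
    · have hbad := (MeasureTheory.ae_iff).1 hFD'.ae_covers
      rw [MeasureTheory.ae_iff]
      have hset : {x | ¬ ∃ g : Λ, g • x ∈ (t⁻¹ • Y' : Set Ω)}
          = (fun x => t • x) ⁻¹' {y | ¬ ∃ g : Λ, g • y ∈ Y'} := by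
        ext x
        simp only [Set.mem_setOf_eq, Set.mem_preimage, not_exists]
        constructor
        · intro h g hg
          apply h g
          rw [hsmulΓ, inv_inv, hcomm]
          exact hg
        · intro h g hg
          apply h g
          rw [hsmulΓ, inv_inv, hcomm] at hg
          exact hg
      rw [hset]
      exact (hΓ t).quasiMeasurePreserving.preimage_null hbad
    · intro u v huv
      have hiden : (u • (t⁻¹ • Y' : Set Ω)) ∩ (v • (t⁻¹ • Y' : Set Ω))
          = (t⁻¹ • (((u • Y') ∩ (v • Y')) : Set Ω) : Set Ω) := by
        rw [hsetcomm, hsetcomm, Set.smul_set_inter]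
      show m ((u • (t⁻¹ • Y' : Set Ω)) ∩ (v • (t⁻¹ • Y' : Set Ω))) = 0
      rw [hiden,
        hmΓsmul t⁻¹ ((hmeasΛsmul u hY'meas).inter (hmeasΛsmul v hY'meas)).nullMeasurableSet]
      exact hFD'.aedisjoint huv
  have he3 : (∫ x in (t⁻¹ • Y' : Set Ω), F x ∂m) = ∫ x in Y', F x ∂m :=
    hFDt.setIntegral_eq hFD' hFinv
  -- (e4)
  have he4 : (∫ x in Y', F x ∂m) = ∫ x in Y', φ (c (γ⁻¹ • x)) ∂m := by
    apply integral_congr_ae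
    filter_upwards [ae_restrict_of_ae hGood_ae, ae_restrict_mem hY'meas] with x hxg hxY
    have hcx : c x = 1 := hc_eq x hxg 1 (by rwa [one_smul])
    simp only [hFdef, if_pos hxg, hcx, inv_one, one_smul]
  -- (f) the tsum identity
  have hsum : (∫ x in Y', φ (c (γ⁻¹ • x)) ∂m)
      = ∑' u : Λ, φ u * ((m ((γ • (u • Y)) ∩ Y)).toReal : ℂ) := by
    set Aset : Λ → Set Ω := fun u => (γ • (u • Y') : Set Ω) ∩ Y' with hAdef
    have hAmeas : ∀ u, MeasurableSet (Aset u) := fun u =>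
      (hmeasΓsmul γ (hmeasΛsmul u hY'meas)).inter hY'meas
    have hAae : ∀ u, m (Aset u) = m ((γ • (u • Y)) ∩ Y) := fun u =>
      measure_congr (MeasureTheory.ae_eq_set_inter (haesmulΓ γ (haesmulΛ u hYae)) hYae)
    have hAdisj : Pairwise (Function.onFun (AEDisjoint m) Aset) := by
      intro u v huv
      have hsub : Aset u ∩ Aset v ⊆ (γ • (((u • Y') ∩ (v • Y')) : Set Ω) : Set Ω) := by
        intro x hx
        rw [Set.smul_set_inter]
        exact ⟨hx.1.1, hx.2.1⟩
      show m (Aset u ∩ Aset v) = 0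
      apply measure_mono_null hsub
      rw [hmΓsmul γ ((hmeasΛsmul u hY'meas).inter (hmeasΛsmul v hY'meas)).nullMeasurableSet]
      exact hFD'.aedisjoint huv
    set h : Ω → ℂ := fun x => φ (c (γ⁻¹ • x)) with hhdef
    have hsm : AEStronglyMeasurable h m := by
      have hhe : h = fun x => (fun k => φ (decΛ k)) (e (γ⁻¹ • x)) := by
        funext x; simp only [hhdef, hdec]
      rw [hhe]
      exact (sm_comp' (fun k => φ (decΛ k))
        (he_meas.comp (hΓ γ⁻¹).measurable)).aestronglyMeasurable
    have hbound : ∀ x, ‖h x‖ ≤ B * A := by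
      intro x
      have hφx : h x = inner ℂ (η 1) (ξ (c (γ⁻¹ • x))) := by
        have := hrep (c (γ⁻¹ • x)) 1
        rwa [inv_one, one_mul] at this
      rw [hφx]
      exact (norm_inner_le_norm _ _).trans (mul_le_mul (hB 1) (hA _) (norm_nonneg _) hB0)
    haveI : IsFiniteMeasure (m.restrict Y') :=
      ⟨by rw [Measure.restrict_apply_univ, hmY']; exact hYfin⟩
    have hint : IntegrableOn h Y' m := by
      rw [IntegrableOn, ← memLp_one_iff_integrable]
      exact MemLp.of_bound hsm.restrict (B * A) (Eventually.of_forall hbound)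
    have hcov0 : m (⋃ u : Λ, (u • Y' : Set Ω))ᶜ = 0 := by
      have := (MeasureTheory.ae_iff).1 hFD'.ae_covers
      convert this using 2
      ext x
      simp only [Set.mem_compl_iff, Set.mem_iUnion, Set.mem_setOf_eq, not_exists]
      constructor
      · intro hk g hg
        exact hk g⁻¹ (by rw [hsmulΛ, inv_inv]; exact hg)
      · intro hk u hu
        rw [hsmulΛ] at hu
        exact hk u⁻¹ hu
    have hcover : Y' =ᵐ[m] ⋃ u : Λ, Aset u := by
      have h1 : (⋃ u : Λ, Aset u) = (γ • (⋃ u : Λ, (u • Y' : Set Ω)) : Set Ω) ∩ Y' := by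
        rw [Set.smul_set_iUnion, Set.iUnion_inter]
      have h3 : m ((γ • (⋃ u : Λ, (u • Y' : Set Ω)) : Set Ω))ᶜ = 0 := by
        have hcompl : ((γ • (⋃ u : Λ, (u • Y' : Set Ω)) : Set Ω))ᶜ
            = (fun x => γ⁻¹ • x) ⁻¹' ((⋃ u : Λ, (u • Y' : Set Ω))ᶜ) := by
          rw [hpreΓ, Set.preimage_compl]
        rw [hcompl]
        exact (hΓ γ⁻¹).quasiMeasurePreserving.preimage_null hcov0
      have h4 : (γ • (⋃ u : Λ, (u • Y' : Set Ω)) : Set Ω) =ᵐ[m] Set.univ :=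
        MeasureTheory.ae_eq_univ.2 h3
      have h5 : ((Set.univ ∩ Y' : Set Ω) : Set Ω)
          =ᵐ[m] (((γ • (⋃ u : Λ, (u • Y' : Set Ω)) : Set Ω) ∩ Y' : Set Ω) : Set Ω) :=
        MeasureTheory.ae_eq_set_inter h4.symm EventuallyEq.rfl
      rw [h1]
      have h6 : Y' =ᵐ[m] ((Set.univ ∩ Y' : Set Ω) : Set Ω) := by rw [Set.univ_inter]; exact EventuallyEq.rfl
      exact h6.trans h5
    have hintU : IntegrableOn h (⋃ u : Λ, Aset u) m := by
      rw [IntegrableOn, ← Measure.restrict_congr_set hcover]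
      exact hint
    calc (∫ x in Y', h x ∂m) = ∫ x in ⋃ u : Λ, Aset u, h x ∂m := setIntegral_congr_set hcover
      _ = ∑' u : Λ, ∫ x in Aset u, h x ∂m :=
          integral_iUnion_ae (fun u => (hAmeas u).nullMeasurableSet) hAdisj hintU
      _ = ∑' u : Λ, φ u * ((m ((γ • (u • Y)) ∩ Y)).toReal : ℂ) := by
          apply tsum_congr
          intro u
          have heq : ∀ᵐ x ∂(m.restrict (Aset u)), h x = φ u := by
            filter_upwards [ae_restrict_of_ae (hGood_ae_pre γ), ae_restrict_mem (hAmeas u)]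
              with x hg hmem
            have hmem' : γ⁻¹ • x ∈ u • Y' := by
              have := hmem.1
              rwa [hsmulΓ] at this
            simp only [hhdef]
            rw [hc_eq _ hg u hmem']
          rw [integral_congr_ae heq, setIntegral_const, measureReal_def, hAae u, Complex.real_smul, mul_comm]
  rw [ha, hb, hc', hd, he1, he2, he3, he4, hsum]
  norm_cast


private theorem b2_nonneg' {G : Type*} [Group G] {φ : G → ℂ} {C : ℝ}
    (h : C ∈ B2BoundSet φ) : 0 ≤ C := by
  obtain ⟨H, _, _, ξ, η, A, B, hA, hB, rfl, _⟩ := h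
  exact mul_nonneg ((norm_nonneg _).trans (hA 1)) ((norm_nonneg _).trans (hB 1))

end Aux

theorem inducedMultiplier_isHerzSchurMultiplier
    {Ω : Type*} [MeasurableSpace Ω] (m : Measure Ω) [SigmaFinite m]
    {Γ Λ : Type*} [Group Γ] [Countable Γ] [Group Λ] [Countable Λ]
    [MulAction Γ Ω] [MulAction Λ Ω]
    (hΓ : ∀ γ : Γ, MeasurePreserving (fun ω => γ • ω) m m)
    (hΛ : ∀ s : Λ, MeasurePreserving (fun ω => s • ω) m m)
    (hcomm : ∀ (γ : Γ) (s : Λ) (ω : Ω), γ • s • ω = s • γ • ω)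
    (Y : Set Ω) (hY : IsFundamentalDomain Λ Y m)
    (hYpos : 0 < m Y) (hYfin : m Y < ⊤)
    (φ : Λ → ℂ) (hφ : IsHerzSchurMultiplier φ) :
    IsHerzSchurMultiplier (inducedMultiplier m Y φ : Γ → ℂ) ∧
      B2Norm (inducedMultiplier m Y φ : Γ → ℂ) ≤ B2Norm φ := by
  have key : ∀ C ∈ B2BoundSet φ, C ∈ B2BoundSet (inducedMultiplier m Y φ : Γ → ℂ) := by
    intro C hC
    exact key_mem m hΓ hΛ hcomm Y hY hYpos hYfin φ (C := C) hC
  constructor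
  · obtain ⟨C, hC⟩ := hφ
    exact ⟨C, key C hC⟩
  · exact csInf_le_csInf ⟨0, fun x hx => b2_nonneg' hx⟩ hφ fun C hC => key C hC
end

section
/- Let Γ and Λ be countable discrete groups acting on a σ-finite measure space (Ω, m) by commuting measure-preserving measurable actions, and let Y ⊆ Ω be a measurable fundamental domain for the Λ-action with 0 < m(Y) < ∞. Suppose the Koopman representation of the Γ-action on L²(Ω, m) is mixing. If φ : Λ → ℂ is bounded and vanishes at infinity on Λ, then the induced function φ̂ : Γ → ℂ, φ̂(γ) = (1/m(Y)) Σ_{s∈Λ} φ(s) m(γ(sY) ∩ Y), vanishes at infinity on Γ. -/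
open MeasureTheory Filter
open scoped Pointwise ENNReal

/-- A function on a discrete group vanishes at infinity. -/
def VanishesAtInfinity {G : Type*} (u : G → ℂ) : Prop :=
  Tendsto u cofinite (nhds 0)

/-- The Koopman representation `(U_γ f)(ω) = f(γ⁻¹ ω)` of a measure-preserving action on
`L²(Ω, m)` is mixing: all coefficients `γ ↦ ⟨U_γ f, g⟩` vanish at infinity. -/
def KoopmanMixing {Ω : Type*} [MeasurableSpace Ω] (m : Measure Ω)
    (Γ : Type*) [Group Γ] [MulAction Γ Ω] : Prop :=
  ∀ f g : Lp ℂ 2 m,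
    VanishesAtInfinity fun γ : Γ => ∫ ω, f (γ⁻¹ • ω) * (starRingEnd ℂ) (g ω) ∂m

/-- Auxiliary: a measure-preserving bijection preserves the measure of the preimage of an
arbitrary set. -/
private lemma measure_preimage_inv_aux {Ω : Type*} [MeasurableSpace Ω] {m : Measure Ω}
    {T S : Ω → Ω} (hT : MeasurePreserving T m m) (hS : Measurable S)
    (h1 : ∀ ω, S (T ω) = ω) (h2 : ∀ ω, T (S ω) = ω) (A : Set Ω) :
    m (T ⁻¹' A) = m A := by
  let e : Ω ≃ᵐ Ω := ⟨⟨T, S, h1, h2⟩, hT.measurable, hS⟩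
  have hmap : m.map e = m := hT.map_eq
  calc m (T ⁻¹' A) = m.map e A := (MeasurableEquiv.map_apply e A).symm
    _ = m A := by rw [hmap]

theorem inducedMultiplier_vanishesAtInfinity
    {Ω : Type*} [MeasurableSpace Ω] (m : Measure Ω) [SigmaFinite m]
    {Γ Λ : Type*} [Group Γ] [Countable Γ] [Group Λ] [Countable Λ]
    [MulAction Γ Ω] [MulAction Λ Ω]
    (hΓ : ∀ γ : Γ, MeasurePreserving (fun ω => γ • ω) m m)
    (hΛ : ∀ s : Λ, MeasurePreserving (fun ω => s • ω) m m)
    (hcomm : ∀ (γ : Γ) (s : Λ) (ω : Ω), γ • s • ω = s • γ • ω)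
    (Y : Set Ω) (hY : IsFundamentalDomain Λ Y m)
    (hYpos : 0 < m Y) (hYfin : m Y < ⊤)
    (hmix : KoopmanMixing m Γ)
    (φ : Λ → ℂ) (C : ℝ) (hbdd : ∀ s, ‖φ s‖ ≤ C)
    (hφ : VanishesAtInfinity φ) :
    VanishesAtInfinity (inducedMultiplier m Y φ : Γ → ℂ) := by
  classical
  letI : MeasurableSpace Λ := ⊤
  haveI : MeasurableSMul Λ Ω :=
    { measurable_const_smul := fun s => (hΛ s).measurable,
      measurable_smul_const := fun _ => measurable_from_top }
  haveI : SMulInvariantMeasure Λ Ω m :=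
    ⟨fun s E hE => (hΛ s).measure_preimage hE.nullMeasurableSet⟩
  -- measure invariance for arbitrary sets
  have hmΓ : ∀ (γ : Γ) (A : Set Ω), m (γ • A) = m A := by
    intro γ A
    have h := measure_preimage_inv_aux (hΓ γ⁻¹) (hΓ γ).measurable
      (fun ω => by simp) (fun ω => by simp) A
    rwa [Set.preimage_smul, inv_inv] at h
  have hmΛ : ∀ (s : Λ) (A : Set Ω), m (s • A) = m A := by
    intro s A
    have h := measure_preimage_inv_aux (hΛ s⁻¹) (hΛ s).measurable
      (fun ω => by simp) (fun ω => by simp) A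
    rwa [Set.preimage_smul, inv_inv] at h
  -- the two actions commute on sets
  have hset : ∀ (γ : Γ) (s : Λ) (A : Set Ω), γ • (s • A) = s • (γ • A) := by
    intro γ s A
    ext ω
    simp only [Set.mem_smul_set_iff_inv_smul_mem]
    rw [hcomm]
  have hpre : ∀ (γ : Γ) (s : Λ) (A : Set Ω),
      γ • (s • A) = (fun ω => s⁻¹ • γ⁻¹ • ω) ⁻¹' A := by
    intro γ s A
    ext ω
    simp [Set.mem_smul_set_iff_inv_smul_mem]
  -- measurable version of Y
  obtain ⟨Y', hY'sub, hY'meas, hY'ae⟩ := hY.nullMeasurableSet.exists_measurable_subset_ae_eq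
  have hmY' : m Y' = m Y := measure_congr hY'ae
  have hsetae : ∀ (γ : Γ) (s : Λ),
      ((γ • (s • Y')) ∩ Y' : Set Ω) =ᵐ[m] ((γ • (s • Y)) ∩ Y : Set Ω) := by
    intro γ s
    have hq : Measure.QuasiMeasurePreserving (fun ω => s⁻¹ • γ⁻¹ • ω) m m :=
      ((hΛ s⁻¹).comp (hΓ γ⁻¹)).quasiMeasurePreserving
    rw [hpre, hpre]
    exact ae_eq_set_inter (hq.preimage_ae_eq hY'ae) hY'ae
  have hmeq : ∀ (γ : Γ) (s : Λ), m ((γ • (s • Y)) ∩ Y) = m ((γ • (s • Y')) ∩ Y') :=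
    fun γ s => (measure_congr (hsetae γ s)).symm
  -- the total mass identity
  have htsum : ∀ γ : Γ, ∑' s : Λ, m ((γ • (s • Y)) ∩ Y) = m Y := by
    intro γ
    calc ∑' s : Λ, m ((γ • (s • Y)) ∩ Y) = ∑' s : Λ, m ((s • (γ • Y)) ∩ Y) := by
          simp_rw [fun s : Λ => hset γ s Y]
      _ = m (γ • Y) := (hY.measure_eq_tsum (γ • Y)).symm
      _ = m Y := hmΓ γ Y
  have hfinterm : ∀ (γ : Γ) (s : Λ), m ((γ • (s • Y)) ∩ Y) ≠ ⊤ := fun γ s =>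
    (lt_of_le_of_lt (measure_mono Set.inter_subset_right) hYfin).ne
  -- summability facts
  have htR : ∀ γ : Γ, Summable (fun s : Λ => (m ((γ • (s • Y)) ∩ Y)).toReal) := by
    intro γ
    exact ENNReal.summable_toReal (by rw [htsum γ]; exact hYfin.ne)
  have htR_sum : ∀ γ : Γ, ∑' s : Λ, (m ((γ • (s • Y)) ∩ Y)).toReal = (m Y).toReal := by
    intro γ
    rw [← ENNReal.tsum_toReal_eq (hfinterm γ), htsum γ]
  have hCsummable : ∀ γ : Γ,
      Summable (fun s : Λ => φ s * ((m ((γ • (s • Y)) ∩ Y)).toReal : ℂ)) := by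
    intro γ
    refine Summable.of_norm_bounded
      (g := fun s => C * (m ((γ • (s • Y)) ∩ Y)).toReal) ((htR γ).mul_left C) fun s => ?_
    rw [norm_mul, Complex.norm_real, Real.norm_eq_abs, abs_of_nonneg ENNReal.toReal_nonneg]
    exact mul_le_mul_of_nonneg_right (hbdd s) ENNReal.toReal_nonneg
  -- the L² elements
  have hAmeas : ∀ s : Λ, MeasurableSet (s • Y' : Set Ω) := by
    intro s
    have h : (s • Y' : Set Ω) = (fun ω => s⁻¹ • ω) ⁻¹' Y' := by
      rw [Set.preimage_smul, inv_inv]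
    rw [h]; exact (hΛ s⁻¹).measurable hY'meas
  have hY'fin : m Y' ≠ ⊤ := by rw [hmY']; exact hYfin.ne
  have hAfin : ∀ s : Λ, m (s • Y' : Set Ω) ≠ ⊤ := fun s => by rw [hmΛ s Y']; exact hY'fin
  set g : Lp ℂ 2 m := indicatorConstLp 2 hY'meas hY'fin (1 : ℂ) with hg
  set f : Λ → Lp ℂ 2 m := fun s => indicatorConstLp 2 (hAmeas s) (hAfin s) (1 : ℂ) with hf
  -- the coefficient identity
  have hint : ∀ (s : Λ) (γ : Γ),
      (∫ ω, (f s) (γ⁻¹ • ω) * (starRingEnd ℂ) (g ω) ∂m)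
        = ((m ((γ • (s • Y)) ∩ Y)).toReal : ℂ) := by
    intro s γ
    have hf1 : (⇑(f s)) =ᵐ[m] (s • Y' : Set Ω).indicator (fun _ => (1 : ℂ)) :=
      indicatorConstLp_coeFn
    have hg1 : (⇑g) =ᵐ[m] (Y' : Set Ω).indicator (fun _ => (1 : ℂ)) :=
      indicatorConstLp_coeFn
    have hcompf : (fun ω => (f s) (γ⁻¹ • ω)) =ᵐ[m]
        (fun ω => (s • Y' : Set Ω).indicator (fun _ => (1 : ℂ)) (γ⁻¹ • ω)) :=
      (hΓ γ⁻¹).quasiMeasurePreserving.ae_eq_comp hf1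
    have hgconj : (fun ω => (starRingEnd ℂ) (g ω)) =ᵐ[m]
        (fun ω => (starRingEnd ℂ) ((Y' : Set Ω).indicator (fun _ => (1 : ℂ)) ω)) :=
      hg1.fun_comp (starRingEnd ℂ)
    have h2 : (fun ω => (s • Y' : Set Ω).indicator (fun _ => (1 : ℂ)) (γ⁻¹ • ω) *
        (starRingEnd ℂ) ((Y' : Set Ω).indicator (fun _ => (1 : ℂ)) ω))
        = ((γ • (s • Y')) ∩ Y' : Set Ω).indicator (fun _ => (1 : ℂ)) := by
      funext ω
      by_cases h1 : ω ∈ (γ • (s • Y') : Set Ω)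
      · have h1' : γ⁻¹ • ω ∈ (s • Y' : Set Ω) := by
          rwa [← Set.mem_smul_set_iff_inv_smul_mem]
        by_cases hω2 : ω ∈ Y' <;> simp [Set.indicator, h1', h1, hω2]
      · have h1' : γ⁻¹ • ω ∉ (s • Y' : Set Ω) := by
          rwa [← Set.mem_smul_set_iff_inv_smul_mem]
        simp [Set.indicator, h1', h1]
    have hms : MeasurableSet ((γ • (s • Y')) ∩ Y' : Set Ω) := by
      have h : (γ • (s • Y') : Set Ω) = (fun ω => γ⁻¹ • ω) ⁻¹' (s • Y') := by
        rw [Set.preimage_smul, inv_inv]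
      exact (h ▸ (hΓ γ⁻¹).measurable (hAmeas s)).inter hY'meas
    calc ∫ ω, (f s) (γ⁻¹ • ω) * (starRingEnd ℂ) (g ω) ∂m
        = ∫ ω, ((γ • (s • Y')) ∩ Y' : Set Ω).indicator (fun _ => (1 : ℂ)) ω ∂m := by
          refine integral_congr_ae ((hcompf.mul hgconj).trans ?_)
          exact Filter.EventuallyEq.of_eq h2
      _ = ((m ((γ • (s • Y)) ∩ Y)).toReal : ℂ) := by
          rw [integral_indicator_const _ hms, hmeq γ s]
          simp
          rfl
  -- each coefficient vanishes at infinity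
  have hcoef : ∀ s : Λ,
      Tendsto (fun γ : Γ => ((m ((γ • (s • Y)) ∩ Y)).toReal : ℂ)) cofinite (nhds 0) := by
    intro s
    have h : (fun γ : Γ => ((m ((γ • (s • Y)) ∩ Y)).toReal : ℂ))
        = fun γ : Γ => ∫ ω, (f s) (γ⁻¹ • ω) * (starRingEnd ℂ) (g ω) ∂m :=
      funext fun γ => (hint s γ).symm
    rw [h]
    exact hmix (f s) g
  -- final assembly
  have hmYR : (0 : ℝ) < (m Y).toReal := ENNReal.toReal_pos hYpos.ne' hYfin.ne
  rw [VanishesAtInfinity, Metric.tendsto_nhds]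
  intro ε hε
  set δ : ℝ := ε / 2 with hδdef
  have hδ : 0 < δ := by positivity
  have hφδ : {s : Λ | ¬ ‖φ s‖ < δ}.Finite := by
    have h := Metric.tendsto_nhds.1 hφ δ hδ
    simp only [dist_zero_right] at h
    exact eventually_cofinite.mp h
  set F : Finset Λ := hφδ.toFinset with hFdef
  have hFmem : ∀ s : Λ, s ∉ F → ‖φ s‖ ≤ δ := by
    intro s hs
    by_contra h
    exact hs (hφδ.mem_toFinset.2 (fun hlt => h (le_of_lt hlt)))
  -- head tends to 0
  have hhead : Tendsto (fun γ : Γ =>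
      ((((m Y).toReal)⁻¹ : ℝ) : ℂ) * ∑ s ∈ F, φ s * ((m ((γ • (s • Y)) ∩ Y)).toReal : ℂ))
      cofinite (nhds 0) := by
    have hsum : Tendsto (fun γ : Γ =>
        ∑ s ∈ F, φ s * ((m ((γ • (s • Y)) ∩ Y)).toReal : ℂ)) cofinite (nhds 0) := by
      have h := tendsto_finset_sum F (fun s _ => ((hcoef s).const_mul (φ s)))
      simpa using h
    simpa using hsum.const_mul (((((m Y).toReal)⁻¹ : ℝ) : ℂ))
  -- tail bound
  have htail : ∀ γ : Γ, ‖inducedMultiplier m Y φ γ -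
      ((((m Y).toReal)⁻¹ : ℝ) : ℂ) * ∑ s ∈ F, φ s * ((m ((γ • (s • Y)) ∩ Y)).toReal : ℂ)‖ ≤ δ := by
    intro γ
    set c : Λ → ℂ := fun s => ((m ((γ • (s • Y)) ∩ Y)).toReal : ℂ) with hc
    set a : Λ → ℂ := fun s => φ s * c s with ha
    set b : Λ → ℂ := fun s => if s ∈ F then 0 else a s with hb
    have ha1 : Summable (fun s => if s ∈ F then a s else 0) :=
      summable_of_ne_finset_zero (s := F) (fun s hs => if_neg hs)
    have hasummable : Summable a := hCsummable γ
    have hbsummable : Summable b := by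
      have h : b = fun s => a s - (if s ∈ F then a s else 0) := by
        funext s; by_cases hs : s ∈ F <;> simp [hb, hs]
      rw [h]
      exact hasummable.sub ha1
    have hsplit : ∑' s, a s = (∑ s ∈ F, a s) + ∑' s, b s := by
      have h : a = fun s => (if s ∈ F then a s else 0) + b s := by
        funext s; by_cases hs : s ∈ F <;> simp [hb, hs]
      calc ∑' s, a s = ∑' s, ((if s ∈ F then a s else 0) + b s) := by rw [← h]
        _ = (∑' s, if s ∈ F then a s else 0) + ∑' s, b s := Summable.tsum_add ha1 hbsummable
        _ = (∑ s ∈ F, a s) + ∑' s, b s := by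
            rw [tsum_eq_sum (s := F) (fun s hs => if_neg hs)]
            congr 1
            exact Finset.sum_congr rfl fun s hs => if_pos hs
    have hbnorm : ∀ s : Λ, ‖b s‖ ≤ δ * (m ((γ • (s • Y)) ∩ Y)).toReal := by
      intro s
      by_cases hs : s ∈ F
      · simp only [hb, if_pos hs, norm_zero]
        positivity
      · simp only [hb, if_neg hs, ha, norm_mul, hc, Complex.norm_real, Real.norm_eq_abs,
          abs_of_nonneg ENNReal.toReal_nonneg]
        exact mul_le_mul_of_nonneg_right (hFmem s hs) ENNReal.toReal_nonneg
    have hbnorm_summable : Summable fun s => ‖b s‖ :=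
      Summable.of_nonneg_of_le (fun s => norm_nonneg _) hbnorm ((htR γ).mul_left δ)
    have hbt : ‖∑' s, b s‖ ≤ δ * (m Y).toReal := by
      calc ‖∑' s, b s‖ ≤ ∑' s, ‖b s‖ := norm_tsum_le_tsum_norm hbnorm_summable
        _ ≤ ∑' s, δ * (m ((γ • (s • Y)) ∩ Y)).toReal :=
            Summable.tsum_le_tsum hbnorm hbnorm_summable ((htR γ).mul_left δ)
        _ = δ * ∑' s, (m ((γ • (s • Y)) ∩ Y)).toReal := tsum_mul_left
        _ = δ * (m Y).toReal := by rw [htR_sum γ]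
    have hrepr : inducedMultiplier m Y φ γ
        = ((((m Y).toReal)⁻¹ : ℝ) : ℂ) * ((∑ s ∈ F, a s) + ∑' s, b s) := by
      rw [inducedMultiplier, ← hsplit]
    rw [hrepr]
    have : ((((m Y).toReal)⁻¹ : ℝ) : ℂ) * ((∑ s ∈ F, a s) + ∑' s, b s)
        - ((((m Y).toReal)⁻¹ : ℝ) : ℂ) * ∑ s ∈ F, φ s * ((m ((γ • (s • Y)) ∩ Y)).toReal : ℂ)
        = ((((m Y).toReal)⁻¹ : ℝ) : ℂ) * ∑' s, b s := by
      simp only [ha, hc]; ring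
    rw [this, norm_mul]
    have hninv : ‖((((m Y).toReal)⁻¹ : ℝ) : ℂ)‖ = ((m Y).toReal)⁻¹ := by
      rw [Complex.norm_real, Real.norm_eq_abs, abs_of_pos (by positivity)]
    rw [hninv]
    calc ((m Y).toReal)⁻¹ * ‖∑' s, b s‖ ≤ ((m Y).toReal)⁻¹ * (δ * (m Y).toReal) :=
          mul_le_mul_of_nonneg_left hbt (by positivity)
      _ = δ := by field_simp
  -- combine
  filter_upwards [Metric.tendsto_nhds.1 hhead δ hδ] with γ hγ
  rw [dist_zero_right] at hγ ⊢
  have h1 := htail γ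
  calc ‖inducedMultiplier m Y φ γ‖
      ≤ ‖((((m Y).toReal)⁻¹ : ℝ) : ℂ) * ∑ s ∈ F, φ s * ((m ((γ • (s • Y)) ∩ Y)).toReal : ℂ)‖
        + ‖inducedMultiplier m Y φ γ -
          ((((m Y).toReal)⁻¹ : ℝ) : ℂ) * ∑ s ∈ F, φ s * ((m ((γ • (s • Y)) ∩ Y)).toReal : ℂ)‖ := by
        have := norm_add_le (((((m Y).toReal)⁻¹ : ℝ) : ℂ) *
          ∑ s ∈ F, φ s * ((m ((γ • (s • Y)) ∩ Y)).toReal : ℂ))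
          (inducedMultiplier m Y φ γ -
          ((((m Y).toReal)⁻¹ : ℝ) : ℂ) * ∑ s ∈ F, φ s * ((m ((γ • (s • Y)) ∩ Y)).toReal : ℂ))
        simpa using this
    _ < δ + δ := add_lt_add_of_lt_of_le hγ h1
    _ = ε := by rw [hδdef]; ring
end

section
/- Let Γ and Λ be countable discrete groups acting on a σ-finite measure space (Ω, m) by commuting measure-preserving measurable actions, and let Y ⊆ Ω be a measurable fundamental domain for the Λ-action with 0 < m(Y) < ∞. Let C > 0 and let (φ_i) be a net of Herz-Schur multipliers on Λ with ‖φ_i‖_{B₂(Λ)} ≤ C for all i and φ_i → 0 pointwise on Λ. Then the induced functions φ̂_i(γ) = (1/m(Y)) Σ_{s∈Λ} φ_i(s) m(γ(sY) ∩ Y) converge to 0 pointwise on Γ. -/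
open MeasureTheory Filter
open scoped Pointwise ENNReal

theorem inducedMultiplier_tendsto_zero_pointwise
    {Ω : Type*} [MeasurableSpace Ω] (m : Measure Ω) [SigmaFinite m]
    {Γ Λ : Type*} [Group Γ] [Countable Γ] [Group Λ] [Countable Λ]
    [MulAction Γ Ω] [MulAction Λ Ω]
    (hΓ : ∀ γ : Γ, MeasurePreserving (fun ω => γ • ω) m m)
    (hΛ : ∀ s : Λ, MeasurePreserving (fun ω => s • ω) m m)
    (hcomm : ∀ (γ : Γ) (s : Λ) (ω : Ω), γ • s • ω = s • γ • ω)
    (Y : Set Ω) (hY : IsFundamentalDomain Λ Y m)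
    (hYpos : 0 < m Y) (hYfin : m Y < ⊤)
    {ι : Type*} (l : Filter ι) (φnet : ι → Λ → ℂ) (C : ℝ)
    (hHS : ∀ i, IsHerzSchurMultiplier (φnet i) ∧ B2Norm (φnet i) ≤ C)
    (hptwise : ∀ s : Λ, Tendsto (fun i => φnet i s) l (nhds 0)) :
    ∀ γ : Γ, Tendsto (fun i => inducedMultiplier m Y (φnet i) γ) l (nhds 0) := by
  -- uniform bound |φnet i s| ≤ C
  have habs : ∀ i s, ‖φnet i s‖ ≤ C := by
    intro i s
    obtain ⟨hne, hle⟩ := hHS i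
    refine le_trans ?_ hle
    refine le_csInf hne ?_
    rintro D ⟨H, _, _, ξ, η, A, B, hA, hB, rfl, hrep⟩
    have h1 := hrep s 1
    rw [inv_one, one_mul] at h1
    calc ‖φnet i s‖ = ‖(inner ℂ (η 1) (ξ s) : ℂ)‖ := by rw [h1]
      _ ≤ ‖η 1‖ * ‖ξ s‖ := norm_inner_le_norm _ _
      _ ≤ B * A := mul_le_mul (hB 1) (hA s) (norm_nonneg _) (le_trans (norm_nonneg _) (hB 1))
      _ = A * B := mul_comm _ _
  intro γ
  set w : Λ → ℝ≥0∞ := fun s => m ((γ • (s • Y)) ∩ Y) with hw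
  -- null measurability
  have hsmul : ∀ s : Λ, γ • (s • Y) = (fun ω => γ⁻¹ • ω) ⁻¹' ((fun ω => s⁻¹ • ω) ⁻¹' Y) := by
    intro s
    rw [Set.preimage_smul, Set.preimage_smul, inv_inv, inv_inv]
  have hnm : ∀ s : Λ, NullMeasurableSet ((γ • (s • Y)) ∩ Y) m := by
    intro s
    refine NullMeasurableSet.inter ?_ hY.nullMeasurableSet
    rw [hsmul s]
    exact (hY.nullMeasurableSet.preimage (hΛ s⁻¹).quasiMeasurePreserving).preimage
      (hΓ γ⁻¹).quasiMeasurePreserving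
  -- pairwise a.e. disjoint
  have hdisj : Pairwise (Function.onFun (AEDisjoint m) fun s : Λ => (γ • (s • Y)) ∩ Y) := by
    intro s t hst
    have h0 : m ((s • Y) ∩ (t • Y)) = 0 := hY.aedisjoint hst
    have h1 : m (γ • ((s • Y) ∩ (t • Y))) = 0 := by
      have : γ • ((s • Y) ∩ (t • Y)) = (fun ω => γ⁻¹ • ω) ⁻¹' ((s • Y) ∩ (t • Y)) := by
        rw [Set.preimage_smul, inv_inv]
      rw [this]
      exact (hΓ γ⁻¹).quasiMeasurePreserving.preimage_null h0
    refine measure_mono_null ?_ h1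
    rw [Set.smul_set_inter]
    intro x hx
    exact ⟨hx.1.1, hx.2.1⟩
  -- sum of weights is finite
  have hwsum : ∑' s, w s ≠ ⊤ := by
    have h1 : ∑' s, w s = m (⋃ s : Λ, (γ • (s • Y)) ∩ Y) := (measure_iUnion₀ hdisj hnm).symm
    have h2 : m (⋃ s : Λ, (γ • (s • Y)) ∩ Y) ≤ m Y :=
      measure_mono (Set.iUnion_subset fun s => Set.inter_subset_right)
    exact ne_top_of_le_ne_top hYfin.ne (h1 ▸ h2)
  have hgsum : Summable fun s => C * (w s).toReal :=
    (ENNReal.summable_toReal hwsum).mul_left C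
  -- dominated convergence
  have hmain : Tendsto (fun i => ∑' s : Λ, φnet i s * ((w s).toReal : ℂ)) l (nhds 0) := by
    have := tendsto_tsum_of_dominated_convergence (𝓕 := l)
      (f := fun i (s : Λ) => φnet i s * ((w s).toReal : ℂ))
      (g := fun _ => 0) (bound := fun s => C * (w s).toReal) hgsum
      (fun s => by simpa using (hptwise s).mul_const (((w s).toReal : ℂ)))
      (Eventually.of_forall fun i => fun s => by
        rw [norm_mul, Complex.norm_real, Real.norm_of_nonneg ENNReal.toReal_nonneg]
        exact mul_le_mul_of_nonneg_right (habs i s) ENNReal.toReal_nonneg)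
    simpa using this
  have := hmain.const_mul (((m Y).toReal)⁻¹ : ℂ)
  simpa [inducedMultiplier, hw] using this
end

section
/- Let Γ and Λ be countable discrete groups acting on a σ-finite measure space (Ω, m) by commuting measure-preserving measurable actions, and let Y ⊆ Ω be a measurable fundamental domain for the Λ-action with 0 < m(Y) < ∞. For f ∈ ℓ¹(Γ) define Φ*(f) : Λ → ℂ by Φ*(f)(s) = (1/m(Y)) Σ_{γ∈Γ} f(γ) m(γ(sY) ∩ Y). Then Φ*(f) ∈ ℓ¹(Λ) with ‖Φ*(f)‖₁ ≤ ‖f‖₁; for every bounded φ : Λ → ℂ one has Σ_{γ∈Γ} φ̂(γ) f(γ) = Σ_{s∈Λ} φ(s) Φ*(f)(s), where φ̂(γ) = (1/m(Y)) Σ_{s∈Λ} φ(s) m(γ(sY) ∩ Y); and ‖Φ*(f)‖_{Q(Λ)} ≤ ‖f‖_{Q(Γ)}. -/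
open MeasureTheory Filter
open scoped Pointwise ENNReal

/-- The norm of `Q(G)`, the predual of `B₂(G)`, on `ℓ¹(G)`:
`‖f‖_Q = sup { |Σ_s f(s) u(s)| : u ∈ B₂(G), ‖u‖_{B₂} ≤ 1 }`. -/
noncomputable def QNorm {G : Type*} [Group G] (f : G → ℂ) : ℝ :=
  sSup {r | ∃ u : G → ℂ, (∃ b ∈ B2BoundSet u, b ≤ 1) ∧ r = ‖∑' s : G, f s * u s‖}

/-- The predual map `Φ*(f)(s) = (1/m(Y)) Σ_{γ∈Γ} f(γ) m(γ(sY) ∩ Y)` for `f ∈ ℓ¹(Γ)`. -/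
noncomputable def dualInducedMap {Ω : Type*} [MeasurableSpace Ω] (m : Measure Ω)
    {Γ Λ : Type*} [Group Γ] [Group Λ] [MulAction Γ Ω] [MulAction Λ Ω]
    (Y : Set Ω) (f : Γ → ℂ) (s : Λ) : ℂ :=
  ((m Y).toReal)⁻¹ * ∑' γ : Γ, f γ * ((m ((γ • (s • Y)) ∩ Y)).toReal : ℂ)

open Set

set_option linter.unusedSectionVars false
set_option maxHeartbeats 1000000


section aux
variable {Ω : Type*} [MeasurableSpace Ω] {m : Measure Ω}
variable {Γ Λ : Type*} [Group Γ] [Group Λ] [MulAction Γ Ω] [MulAction Λ Ω]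

lemma smul_comm_set (hcomm : ∀ (γ : Γ) (s : Λ) (ω : Ω), γ • s • ω = s • γ • ω)
    (γ : Γ) (s : Λ) (Z : Set Ω) : γ • (s • Z) = s • (γ • Z) := by
  simp only [← Set.image_smul, Set.image_image]
  exact Set.image_congr fun ω _ => hcomm γ s ω

lemma fd_smul [Countable Λ]
    (hΓ : ∀ γ : Γ, MeasurePreserving (fun ω => γ • ω) m m)
    (hcomm : ∀ (γ : Γ) (s : Λ) (ω : Ω), γ • s • ω = s • γ • ω)
    {Y : Set Ω} (hY : IsFundamentalDomain Λ Y m) (γ : Γ) :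
    IsFundamentalDomain Λ (γ • Y) m := by
  have h : γ • Y = (MulAction.toPerm γ : Equiv.Perm Ω) '' Y := (Set.image_smul).symm
  rw [h]
  exact hY.image_of_equiv (MulAction.toPerm γ) (hΓ γ⁻¹).quasiMeasurePreserving
    (Equiv.refl Λ) (fun s ω => hcomm γ s ω)

-- measure of smul
lemma m_smul (hΓ : ∀ γ : Γ, MeasurePreserving (fun ω => γ • ω) m m)
    (γ : Γ) (A : Set Ω) (hA : NullMeasurableSet A m) : m (γ • A) = m A := by
  have : γ • A = (fun ω => γ⁻¹ • ω) ⁻¹' A := by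
    ext ω; simp [Set.mem_smul_set_iff_inv_smul_mem]
  rw [this]
  exact (hΓ γ⁻¹).measure_preimage hA
end aux


section aux2
variable {Ω : Type*} [MeasurableSpace Ω] {m : Measure Ω}
variable {Γ Λ : Type*} [Group Γ] [Countable Γ] [Group Λ] [Countable Λ]
  [MulAction Γ Ω] [MulAction Λ Ω]

lemma nm_smul {G : Type*} [Group G] [MulAction G Ω]
    (hG : ∀ g : G, MeasurePreserving (fun ω => g • ω) m m)
    (g : G) {A : Set Ω} (hA : NullMeasurableSet A m) : NullMeasurableSet (g • A) m := by
  have : g • A = (fun ω => g⁻¹ • ω) ⁻¹' A := by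
    ext ω; simp [Set.mem_smul_set_iff_inv_smul_mem]
  rw [this]
  exact hA.preimage (hG g⁻¹).quasiMeasurePreserving

/-- tsum over translates of a fundamental domain. -/
lemma fd_tsum {G : Type*} [Group G] [Countable G] [MulAction G Ω]
    (hG : ∀ g : G, MeasurePreserving (fun ω => g • ω) m m)
    {Z : Set Ω} (hZ : IsFundamentalDomain G Z m) (W : Set Ω) :
    ∑' g : G, m (W ∩ g • Z) = m W := by
  letI : MeasurableSpace G := ⊤
  haveI : MeasurableSMul G Ω :=
    { measurable_const_smul := fun c => (hG c).measurable,
      measurable_smul_const := fun ω => measurable_of_countable _ }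
  haveI : SMulInvariantMeasure G Ω m :=
    ⟨fun c s hs => (hG c).measure_preimage hs.nullMeasurableSet⟩
  exact (hZ.measure_eq_tsum' W).symm

lemma nm_T (hΓ : ∀ γ : Γ, MeasurePreserving (fun ω => γ • ω) m m)
    (hΛ : ∀ s : Λ, MeasurePreserving (fun ω => s • ω) m m)
    {Y : Set Ω} (hY : IsFundamentalDomain Λ Y m) (γ : Γ) (s : Λ) :
    NullMeasurableSet (γ • (s • Y)) m :=
  nm_smul hΓ γ (nm_smul hΛ s hY.nullMeasurableSet)

/-- K2: row sums. -/
lemma K2 (hΓ : ∀ γ : Γ, MeasurePreserving (fun ω => γ • ω) m m)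
    (hΛ : ∀ s : Λ, MeasurePreserving (fun ω => s • ω) m m)
    (hcomm : ∀ (γ : Γ) (s : Λ) (ω : Ω), γ • s • ω = s • γ • ω)
    {Y : Set Ω} (hY : IsFundamentalDomain Λ Y m) (γ : Γ) :
    ∑' s : Λ, m ((γ • (s • Y)) ∩ Y) = m Y := by
  have h1 : ∀ s : Λ, (γ • (s • Y)) ∩ Y = Y ∩ s • (γ • Y) := by
    intro s; rw [smul_comm_set hcomm, Set.inter_comm]
  simp_rw [h1]
  exact fd_tsum hΛ (fd_smul hΓ hcomm hY γ) Y

/-- K3: the key convolution identity. -/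
lemma K3 (hΓ : ∀ γ : Γ, MeasurePreserving (fun ω => γ • ω) m m)
    (hΛ : ∀ s : Λ, MeasurePreserving (fun ω => s • ω) m m)
    (hcomm : ∀ (γ : Γ) (s : Λ) (ω : Ω), γ • s • ω = s • γ • ω)
    {Y : Set Ω} (hY : IsFundamentalDomain Λ Y m) (α β : Γ) (s : Λ) :
    ∑' t : Λ, m (Y ∩ (β • (t • Y)) ∩ (α • ((t * s) • Y)))
      = m (((β⁻¹ * α) • (s • Y)) ∩ Y) := by
  have hterm : ∀ t : Λ,
      m (Y ∩ (β • (t • Y)) ∩ (α • ((t * s) • Y)))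
        = m ((Y ∩ ((β⁻¹ * α) • (s • Y))) ∩ (t⁻¹ • (β⁻¹ • Y))) := by
    intro t
    have e1 : Y ∩ (β • (t • Y)) ∩ (α • ((t * s) • Y))
        = Y ∩ t • ((β • Y) ∩ (α • (s • Y))) := by
      rw [mul_smul t s Y, smul_comm_set hcomm α t (s • Y), smul_comm_set hcomm β t Y,
        Set.inter_assoc, ← Set.smul_set_inter]
    rw [e1]
    have nm1 : NullMeasurableSet (Y ∩ t • ((β • Y) ∩ (α • (s • Y)))) m :=
      hY.nullMeasurableSet.inter (nm_smul hΛ t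
        ((nm_smul hΓ β hY.nullMeasurableSet).inter (nm_T hΓ hΛ hY α s)))
    rw [← m_smul hΛ t⁻¹ _ nm1, Set.smul_set_inter, inv_smul_smul]
    have nm2 : NullMeasurableSet ((t⁻¹ • Y) ∩ ((β • Y) ∩ (α • (s • Y)))) m :=
      (nm_smul hΛ t⁻¹ hY.nullMeasurableSet).inter
        ((nm_smul hΓ β hY.nullMeasurableSet).inter (nm_T hΓ hΛ hY α s))
    rw [← m_smul hΓ β⁻¹ _ nm2, Set.smul_set_inter, Set.smul_set_inter, inv_smul_smul,
      smul_comm_set hcomm β⁻¹ t⁻¹ Y, smul_smul β⁻¹ α]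
    congr 1
    ext ω
    simp only [Set.mem_inter_iff]
    tauto
  simp_rw [hterm]
  rw [Set.inter_comm ((β⁻¹ * α) • (s • Y)) Y]
  refine Eq.trans ?_ (fd_tsum hΛ (fd_smul hΓ hcomm hY β⁻¹) (Y ∩ ((β⁻¹ * α) • (s • Y))))
  exact (Equiv.inv Λ).tsum_eq
    (fun t => m ((Y ∩ ((β⁻¹ * α) • (s • Y))) ∩ (t • (β⁻¹ • Y))))

end aux2

section hilb

/-- Any function from `ℕ` is strongly measurable. -/
lemma stronglyMeasurable_nat {H : Type*} [TopologicalSpace H] (g : ℕ → H) :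
    StronglyMeasurable g := by
  refine ⟨fun n => ⟨fun k => g (min k n), fun x => .of_discrete, ?_⟩, fun k => ?_⟩
  · have : Set.range (fun k => g (min k n)) ⊆ g '' (Set.Iic n) := by
      rintro _ ⟨k, rfl⟩; exact ⟨min k n, by simp, rfl⟩
    exact ((Set.finite_Iic n).image g).subset this
  · refine tendsto_const_nhds.congr' ?_
    filter_upwards [Filter.eventually_ge_atTop k] with n hn
    simp [min_eq_left hn]

lemma measurableSet_coord (n : ℕ) (b : Bool) : MeasurableSet {x : ℕ → Bool | x n = b} := by
  have : {x : ℕ → Bool | x n = b} = (fun x : ℕ → Bool => x n) ⁻¹' {b} := rfl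
  rw [this]
  exact (measurable_pi_apply n) (measurableSet_singleton b)

lemma measurable_findIdx (c : ℕ → ℕ) :
    Measurable (fun x : ℕ → Bool =>
      @dite ℕ (∃ k, x (c k) = true) (Classical.propDecidable _)
        (fun h => Nat.find h) (fun _ => 0)) := by
  apply measurable_to_countable'
  intro j
  have hdesc : (fun x : ℕ → Bool =>
      @dite ℕ (∃ k, x (c k) = true) (Classical.propDecidable _)
        (fun h => Nat.find h) (fun _ => 0)) ⁻¹' {j}
      = ({x : ℕ → Bool | x (c j) = true} ∩ ⋂ (i : ℕ) (_ : i < j), {x | x (c i) = false})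
        ∪ (if j = 0 then (⋂ (k : ℕ), {x : ℕ → Bool | x (c k) = false}) else ∅) := by
    ext x
    simp only [Set.mem_preimage, Set.mem_singleton_iff, Set.mem_union, Set.mem_inter_iff,
      Set.mem_setOf_eq, Set.mem_iInter]
    by_cases h : ∃ k, x (c k) = true
    · rw [dif_pos h, Nat.find_eq_iff h]
      constructor
      · rintro ⟨h1, h2⟩
        exact Or.inl ⟨h1, fun i hi => by simpa using h2 i hi⟩
      · rintro (⟨h1, h2⟩ | hbad)
        · exact ⟨h1, fun i hi => by simp [h2 i hi]⟩
        · exfalso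
          obtain ⟨k, hk⟩ := h
          rcases eq_or_ne j 0 with rfl | hj
          · rw [if_pos rfl] at hbad
            have := Set.mem_iInter.1 hbad k
            rw [Set.mem_setOf_eq] at this
            rw [this] at hk
            exact absurd hk (by simp)
          · rw [if_neg hj] at hbad
            exact hbad
    · rw [dif_neg h]
      push_neg at h
      constructor
      · rintro rfl
        refine Or.inr ?_
        rw [if_pos rfl]
        exact Set.mem_iInter.2 fun k => by
          have := h k; simpa using this
      · rintro (⟨h1, _⟩ | hbad)
        · exact absurd h1 (h j)
        · rcases eq_or_ne j 0 with rfl | hj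
          · rfl
          · rw [if_neg hj] at hbad
            exact absurd hbad (Set.notMem_empty x)
  rw [hdesc]
  refine MeasurableSet.union
    ((measurableSet_coord _ true).inter (MeasurableSet.iInter fun i =>
      MeasurableSet.iInter fun _ => measurableSet_coord _ false)) ?_
  split
  · exact MeasurableSet.iInter fun k => measurableSet_coord _ false
  · exact MeasurableSet.empty

end hilb

set_option maxHeartbeats 1000000 in
lemma induced_mem_B2
    {Ω : Type*} [MeasurableSpace Ω] {m : Measure Ω}
    {Γ Λ : Type*} [Group Γ] [Countable Γ] [Group Λ] [Countable Λ]
    [MulAction Γ Ω] [MulAction Λ Ω]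
    (hΓ : ∀ γ : Γ, MeasurePreserving (fun ω => γ • ω) m m)
    (hΛ : ∀ s : Λ, MeasurePreserving (fun ω => s • ω) m m)
    (hcomm : ∀ (γ : Γ) (s : Λ) (ω : Ω), γ • s • ω = s • γ • ω)
    {Y : Set Ω} (hY : IsFundamentalDomain Λ Y m)
    (hYpos : 0 < m Y) (hYfin : m Y < ⊤)
    (u : Λ → ℂ) {b : ℝ} (hb : b ∈ B2BoundSet u) :
    b ∈ B2BoundSet (inducedMultiplier m (Γ := Γ) Y u) := by
  classical
  obtain ⟨H, hNorm, hInner, ξ, η, A, B, hA, hB, hC, hrep⟩ := hb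
  obtain ⟨epair, hepair⟩ := exists_injective_nat (Γ × Λ)
  obtain ⟨enumΛ, henum⟩ := exists_surjective_nat Λ
  set rY : ℝ := (m Y).toReal with hrY
  have hrYpos : 0 < rY := ENNReal.toReal_pos hYpos.ne' hYfin.ne
  have hA0 : 0 ≤ A := le_trans (norm_nonneg (ξ 1)) (hA 1)
  have hB0 : 0 ≤ B := le_trans (norm_nonneg (η 1)) (hB 1)
  -- the translates
  set T : Γ × Λ → Set Ω := fun p => p.1 • (p.2 • Y) with hTdef
  have nmT : ∀ p : Γ × Λ, NullMeasurableSet (T p) m := fun p => nm_T hΓ hΛ hY p.1 p.2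
  have hTY : ∀ p : Γ × Λ, m (T p ∩ Y) ≠ ⊤ :=
    fun p => ((measure_mono Set.inter_subset_right).trans_lt hYfin).ne
  have hdisT : ∀ (γ : Γ) (t t' : Λ), t ≠ t' → m (T (γ, t) ∩ T (γ, t')) = 0 := by
    intro γ t t' hne
    have h1 : T (γ, t) = t • (γ • Y) := smul_comm_set hcomm γ t Y
    have h2 : T (γ, t') = t' • (γ • Y) := smul_comm_set hcomm γ t' Y
    rw [h1, h2]
    exact (fd_smul hΓ hcomm hY γ).aedisjoint hne
  have hcov : ∀ γ : Γ, ∀ᵐ ω ∂m, ω ∈ ⋃ t : Λ, T (γ, t) := by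
    intro γ
    filter_upwards [(fd_smul hΓ hcomm hY γ).ae_covers] with ω hω
    obtain ⟨g, hg⟩ := hω
    refine Set.mem_iUnion.2 ⟨g⁻¹, ?_⟩
    show ω ∈ γ • (g⁻¹ • Y)
    rw [smul_comm_set hcomm γ g⁻¹ Y]
    rwa [Set.mem_smul_set_iff_inv_smul_mem, inv_inv]
  -- measurable versions of the translates
  set S : ℕ → Set Ω := fun n => toMeasurable m (⋃ (p : Γ × Λ) (_ : epair p = n), T p) with hSdef
  have hSmeas : ∀ n, MeasurableSet (S n) := fun n => measurableSet_toMeasurable m _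
  have hSae : ∀ p : Γ × Λ, S (epair p) =ᵐ[m] T p := by
    intro p
    have h1 : (⋃ (q : Γ × Λ) (_ : epair q = epair p), T q) = T p := by
      apply Set.Subset.antisymm
      · exact Set.iUnion₂_subset fun q hq => by rw [hepair hq]
      · exact Set.subset_iUnion₂ (s := fun q (_ : epair q = epair p) => T q) p rfl
    have h2 : NullMeasurableSet (⋃ (q : Γ × Λ) (_ : epair q = epair p), T q) m := by
      rw [h1]; exact nmT p
    refine h2.toMeasurable_ae_eq.trans ?_
    rw [h1]
    exact Filter.EventuallyEq.rfl
  -- the factor map to the Cantor cube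
  set F : Ω → ℕ → Bool := fun ω n => if ω ∈ S n then true else false with hFdef
  have hF : Measurable F :=
    measurable_pi_lambda _ fun n => Measurable.ite (hSmeas n) measurable_const measurable_const
  set μ : Measure Ω := m.restrict Y with hμdef
  haveI : IsFiniteMeasure μ := ⟨by rw [Measure.restrict_apply_univ]; exact hYfin⟩
  set ν : Measure (ℕ → Bool) := μ.map F with hνdef
  haveI : IsFiniteMeasure ν := ⟨by
    rw [hνdef, Measure.map_apply hF MeasurableSet.univ, Set.preimage_univ]
    exact measure_lt_top μ _⟩
  have hνuniv : ν Set.univ = m Y := by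
    rw [hνdef, Measure.map_apply hF MeasurableSet.univ, Set.preimage_univ,
      Measure.restrict_apply_univ]
  -- the index-selection maps
  set cidx : Γ → ℕ → ℕ := fun α k => epair (α, enumΛ k) with hcidx
  set N : Γ → (ℕ → Bool) → ℕ := fun α x =>
    @dite ℕ (∃ k, x (cidx α k) = true) (Classical.propDecidable _)
      (fun h => Nat.find h) (fun _ => 0) with hNdef
  have hN : ∀ α, Measurable (N α) := fun α => measurable_findIdx (cidx α)
  set Gξ : Γ → (ℕ → Bool) → H := fun α x => ξ (enumΛ (N α x)) with hGξdef
  set Gη : Γ → (ℕ → Bool) → H := fun α x => η (enumΛ (N α x)) with hGηdef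
  have smGξ : ∀ α, StronglyMeasurable (Gξ α) :=
    fun α => (stronglyMeasurable_nat (fun k => ξ (enumΛ k))).comp_measurable (hN α)
  have smGη : ∀ α, StronglyMeasurable (Gη α) :=
    fun α => (stronglyMeasurable_nat (fun k => η (enumΛ k))).comp_measurable (hN α)
  have memGξ : ∀ α, MemLp (Gξ α) 2 ν :=
    fun α => MemLp.of_bound (smGξ α).aestronglyMeasurable A (Eventually.of_forall fun x => hA _)
  have memGη : ∀ α, MemLp (Gη α) 2 ν :=
    fun α => MemLp.of_bound (smGη α).aestronglyMeasurable B (Eventually.of_forall fun x => hB _)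
  set c : ℂ := ((Real.sqrt rY⁻¹ : ℝ) : ℂ) with hcdef
  set ξ' : Γ → Lp H 2 ν := fun α => c • ((memGξ α).toLp (Gξ α)) with hξ'def
  set η' : Γ → Lp H 2 ν := fun α => c • ((memGη α).toLp (Gη α)) with hη'def
  -- norm bounds
  have normbound : ∀ (G : (ℕ → Bool) → H) (hG : MemLp G 2 ν) (D : ℝ), 0 ≤ D →
      (∀ x, ‖G x‖ ≤ D) → ‖c • (hG.toLp G)‖ ≤ D := by
    intro G hG D hD0 hbd
    rw [norm_smul]
    have h1 : ‖hG.toLp G‖ = (eLpNorm G 2 ν).toReal := Lp.norm_toLp G hG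
    have h2 : eLpNorm G 2 ν ≤ (m Y) ^ ((2:ℝ≥0∞).toReal)⁻¹ * ENNReal.ofReal D := by
      rw [← hνuniv]
      exact eLpNorm_le_of_ae_bound (Eventually.of_forall hbd)
    have hne : (m Y) ^ ((2:ℝ≥0∞).toReal)⁻¹ * ENNReal.ofReal D ≠ ⊤ :=
      ENNReal.mul_ne_top (ENNReal.rpow_ne_top_of_nonneg (by norm_num) hYfin.ne)
        ENNReal.ofReal_ne_top
    have h3 : (eLpNorm G 2 ν).toReal ≤ Real.sqrt rY * D := by
      refine le_trans (ENNReal.toReal_mono hne h2) ?_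
      rw [ENNReal.toReal_mul, ENNReal.toReal_ofReal hD0, ← ENNReal.toReal_rpow]
      have : (2:ℝ≥0∞).toReal = 2 := by norm_num
      rw [this, Real.sqrt_eq_rpow, ← hrY]
      norm_num
    have hcnorm : ‖c‖ = (Real.sqrt rY)⁻¹ := by
      rw [hcdef, Complex.norm_real, Real.norm_eq_abs, abs_of_nonneg (Real.sqrt_nonneg _), Real.sqrt_inv]
    calc ‖c‖ * ‖hG.toLp G‖ ≤ (Real.sqrt rY)⁻¹ * (Real.sqrt rY * D) := by
          rw [hcnorm, h1]
          exact mul_le_mul_of_nonneg_left h3 (by positivity)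
      _ = D := by
          rw [← mul_assoc, inv_mul_cancel₀ (ne_of_gt (Real.sqrt_pos.2 hrYpos)), one_mul]
  -- the a.e. identification of the vector-valued maps
  have hpt : ∀ γ : Γ, ∀ᵐ ω ∂m, ∀ r : Λ, ω ∈ T (γ, r) → enumΛ (N γ (F ω)) = r := by
    intro γ
    have huniq : ∀ᵐ ω ∂m, ∀ t t' : Λ, ω ∈ T (γ, t) → ω ∈ T (γ, t') → t = t' := by
      rw [ae_all_iff]
      intro t
      rw [ae_all_iff]
      intro t'
      rcases eq_or_ne t t' with rfl | hne
      · exact Eventually.of_forall (fun ω _ _ => rfl)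
      · filter_upwards [measure_eq_zero_iff_ae_notMem.1 (hdisT γ t t' hne)] with ω hω h1 h2
        exact absurd ⟨h1, h2⟩ hω
    filter_upwards [ae_all_iff.2 (fun p : Γ × Λ => eventuallyEq_set.1 (hSae p)), huniq]
      with ω hST huni r hr
    have hex : ∃ k, F ω (cidx γ k) = true := by
      obtain ⟨k, hk⟩ := henum r
      refine ⟨k, ?_⟩
      have hmem : ω ∈ S (epair (γ, enumΛ k)) := (hST (γ, enumΛ k)).2 (by rw [hk]; exact hr)
      show (if ω ∈ S (cidx γ k) then true else false) = true
      rw [if_pos hmem]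
    have hNval : N γ (F ω) = Nat.find hex := dif_pos hex
    have h1 : F ω (cidx γ (Nat.find hex)) = true := Nat.find_spec hex
    have h2 : ω ∈ T (γ, enumΛ (Nat.find hex)) := by
      have hmem : ω ∈ S (epair (γ, enumΛ (Nat.find hex))) := by
        by_contra hc
        have : (if ω ∈ S (cidx γ (Nat.find hex)) then true else false) = true := h1
        rw [if_neg hc] at this
        exact Bool.false_ne_true this
      exact (hST (γ, enumΛ (Nat.find hex))).1 hmem
    rw [hNval]
    exact huni _ r h2 hr
  -- the key inner-product identity
  have key : ∀ σ τ : Γ, inducedMultiplier m Y u (τ⁻¹ * σ) = (inner ℂ (η' τ) (ξ' σ) : ℂ) := by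
    intro σ τ
    set P : Λ × Λ → Set Ω := fun q => Y ∩ T (τ, q.1) ∩ T (σ, q.2) with hPdef
    have nmP : ∀ q, NullMeasurableSet (P q) m :=
      fun q => (hY.nullMeasurableSet.inter (nmT _)).inter (nmT _)
    have hPsubY : ∀ q, P q ⊆ Y :=
      fun q => Set.Subset.trans Set.inter_subset_left Set.inter_subset_left
    have hPdis : Pairwise (Function.onFun (AEDisjoint m) P) := by
      intro q q' hne
      have hor : q.1 ≠ q'.1 ∨ q.2 ≠ q'.2 := by
        by_contra hcon
        push_neg at hcon
        exact hne (Prod.ext hcon.1 hcon.2)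
      rcases hor with h | h
      · refine measure_mono_null ?_ (hdisT τ q.1 q'.1 h)
        rintro ω ⟨hq, hq'⟩
        exact ⟨hq.1.2, hq'.1.2⟩
      · refine measure_mono_null ?_ (hdisT σ q.2 q'.2 h)
        rintro ω ⟨hq, hq'⟩
        exact ⟨hq.2, hq'.2⟩
    have hPcover : (Y : Set Ω) =ᵐ[m] ⋃ q : Λ × Λ, P q := by
      rw [eventuallyEq_set]
      filter_upwards [hcov τ, hcov σ] with ω h1 h2
      constructor
      · intro hωY
        obtain ⟨t, ht⟩ := Set.mem_iUnion.1 h1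
        obtain ⟨r, hr⟩ := Set.mem_iUnion.1 h2
        exact Set.mem_iUnion.2 ⟨(t, r), ⟨⟨hωY, ht⟩, hr⟩⟩
      · intro hω
        obtain ⟨q, hq⟩ := Set.mem_iUnion.1 hω
        exact hq.1.1
    set h : Ω → ℂ := fun ω => (inner ℂ (Gη τ (F ω)) (Gξ σ (F ω)) : ℂ) with hhdef
    have hmeas_inner : StronglyMeasurable fun x : ℕ → Bool => (inner ℂ (Gη τ x) (Gξ σ x) : ℂ) :=
      (smGη τ).inner (smGξ σ)
    have hhsm : StronglyMeasurable h := hmeas_inner.comp_measurable hF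
    have hhbd : ∀ ω, ‖h ω‖ ≤ B * A := fun ω =>
      le_trans (norm_inner_le_norm _ _)
        (mul_le_mul (hB _) (hA _) (norm_nonneg _) hB0)
    -- step 1
    have step1 : (inner ℂ (η' τ) (ξ' σ) : ℂ) = ((rY⁻¹ : ℝ) : ℂ) * ∫ ω, h ω ∂μ := by
      simp only [hη'def, hξ'def]
      rw [inner_smul_left, inner_smul_right, ← mul_assoc]
      have hcc : (starRingEnd ℂ) c * c = ((rY⁻¹ : ℝ) : ℂ) := by
        rw [hcdef, Complex.conj_ofReal, ← Complex.ofReal_mul,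
          Real.mul_self_sqrt (inv_nonneg.2 hrYpos.le)]
      rw [hcc]
      congr 1
      have hL2 : (inner ℂ ((memGη τ).toLp (Gη τ)) ((memGξ σ).toLp (Gξ σ)) : ℂ)
          = ∫ x, (inner ℂ (Gη τ x) (Gξ σ x) : ℂ) ∂ν := by
        rw [L2.inner_def]
        apply integral_congr_ae
        filter_upwards [(memGη τ).coeFn_toLp, (memGξ σ).coeFn_toLp] with x hx1 hx2
        rw [hx1, hx2]
      rw [hL2, hνdef, integral_map hF.aemeasurable
        (by rw [← hνdef]; exact hmeas_inner.aestronglyMeasurable)]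
    -- step 2
    have step2 : ∫ ω, h ω ∂μ = ∑' q : Λ × Λ, (m (P q)).toReal • u (q.1⁻¹ * q.2) := by
      have e0 : ∫ ω, h ω ∂μ = ∫ ω in ⋃ q : Λ × Λ, P q, h ω ∂m := by
        rw [hμdef]
        exact setIntegral_congr_set hPcover
      haveI : IsFiniteMeasure (m.restrict (⋃ q : Λ × Λ, P q)) := ⟨by
        rw [Measure.restrict_apply_univ]
        exact lt_of_le_of_lt (measure_mono (Set.iUnion_subset hPsubY)) hYfin⟩
      have hint : IntegrableOn h (⋃ q : Λ × Λ, P q) m := by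
        refine Integrable.mono' (integrable_const (B * A)) hhsm.aestronglyMeasurable ?_
        exact Eventually.of_forall hhbd
      rw [e0, integral_iUnion_ae nmP hPdis hint]
      apply tsum_congr
      intro q
      rw [setIntegral_congr_ae₀ (nmP q)
        (g := fun _ => u (q.1⁻¹ * q.2)) ?_, setIntegral_const]
      · rfl
      filter_upwards [hpt τ, hpt σ] with ω h1 h2 hω
      have e1 : Gη τ (F ω) = η q.1 := congrArg η (h1 q.1 hω.1.2)
      have e2 : Gξ σ (F ω) = ξ q.2 := congrArg ξ (h2 q.2 hω.2)
      show (inner ℂ (Gη τ (F ω)) (Gξ σ (F ω)) : ℂ) = u (q.1⁻¹ * q.2)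
      rw [e1, e2, ← hrep q.2 q.1]
    -- step 3 : summability and reindexing
    have hPsumfin : (∑' q : Λ × Λ, m (P q)) ≠ ⊤ := by
      rw [← measure_iUnion₀ hPdis nmP]
      exact ((measure_mono (Set.iUnion_subset hPsubY)).trans_lt hYfin).ne
    have hPsummable : Summable (fun q : Λ × Λ => (m (P q)).toReal) :=
      ENNReal.summable_toReal hPsumfin
    have hubd : ∀ s : Λ, ‖u s‖ ≤ B * A := by
      intro s
      have h1 : u s = (inner ℂ (η 1) (ξ s) : ℂ) := by
        have := hrep s 1
        rwa [inv_one, one_mul] at this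
      rw [h1]
      exact le_trans (norm_inner_le_norm _ _)
        (mul_le_mul (hB _) (hA _) (norm_nonneg _) hB0)
    have hg : Summable (fun q : Λ × Λ => (m (P q)).toReal • u (q.1⁻¹ * q.2)) := by
      refine Summable.of_norm_bounded
        (hPsummable.mul_right (B * A)) ?_
      intro q
      rw [norm_smul, Real.norm_eq_abs, abs_of_nonneg ENNReal.toReal_nonneg]
      exact mul_le_mul_of_nonneg_left (hubd _) ENNReal.toReal_nonneg
    set e : Λ × Λ ≃ Λ × Λ :=
      { toFun := fun q => (q.2, q.2 * q.1)
        invFun := fun q => (q.1⁻¹ * q.2, q.1)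
        left_inv := fun q => by simp
        right_inv := fun q => by simp } with hedef
    have hptws : ∀ q : Λ × Λ,
        (m (P (e q))).toReal • u ((e q).1⁻¹ * (e q).2)
          = (m (P (q.2, q.2 * q.1))).toReal • u q.1 := by
      intro q
      simp only [hedef, Equiv.coe_fn_mk, inv_mul_cancel_left]
    have he : (∑' q : Λ × Λ, (m (P q)).toReal • u (q.1⁻¹ * q.2))
        = ∑' q : Λ × Λ, (m (P (q.2, q.2 * q.1))).toReal • u q.1 := by
      rw [← e.tsum_eq (fun q => (m (P q)).toReal • u (q.1⁻¹ * q.2))]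
      exact tsum_congr hptws
    have hsum_e : Summable (fun q : Λ × Λ => (m (P (q.2, q.2 * q.1))).toReal • u q.1) := by
      refine Summable.congr ((e.summable_iff).2 hg) hptws
    have hinner : ∀ s : Λ,
        (∑' t : Λ, (m (P (t, t * s))).toReal • u s)
          = ((m (((τ⁻¹ * σ) • (s • Y)) ∩ Y)).toReal) • u s := by
      intro s
      have hs1 : Summable (fun t : Λ => (m (P (t, t * s))).toReal) := by
        refine hPsummable.comp_injective (i := fun t : Λ => ((t, t * s) : Λ × Λ)) ?_
        intro a b hab
        exact (Prod.ext_iff.1 hab).1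
      rw [Summable.tsum_smul_const hs1]
      congr 1
      rw [← ENNReal.tsum_toReal_eq
        (fun t => ((measure_mono (hPsubY _)).trans_lt hYfin).ne)]
      congr 1
      exact K3 hΓ hΛ hcomm hY σ τ s
    have step3 : (∑' q : Λ × Λ, (m (P q)).toReal • u (q.1⁻¹ * q.2))
        = ∑' s : Λ, ((m (((τ⁻¹ * σ) • (s • Y)) ∩ Y)).toReal) • u s := by
      have hrow : ∀ s : Λ, Summable (fun t : Λ => (m (P (t, t * s))).toReal • u s) := by
        intro s
        refine hsum_e.comp_injective (i := fun t : Λ => ((s, t) : Λ × Λ)) ?_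
        intro a b' hab
        exact (Prod.ext_iff.1 hab).2
      rw [he, Summable.tsum_prod' hsum_e hrow]
      exact tsum_congr hinner
    rw [step1, step2, step3]
    rw [inducedMultiplier]
    rw [Complex.ofReal_inv]
    congr 1
    apply tsum_congr
    intro s
    rw [Complex.real_smul, mul_comm]
  exact ⟨Lp H 2 ν, inferInstance, inferInstance, ξ', η', A, B,
    fun α => normbound _ _ A hA0 (fun x => hA _),
    fun α => normbound _ _ B hB0 (fun x => hB _), hC, fun σ τ => key σ τ⟩


section abstractL1
variable {Γ Λ : Type*} [Countable Γ] [Countable Λ]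

lemma prod_summable_abstract (w : Γ → Λ → ℝ) (rY : ℝ)
    (hw0 : ∀ γ s, 0 ≤ w γ s) (hwsum : ∀ γ, Summable (w γ))
    (hwtsum : ∀ γ, (∑' s, w γ s) = rY)
    (f : Γ → ℂ) (hf : Summable fun γ => ‖f γ‖) :
    Summable (fun p : Γ × Λ => ‖f p.1‖ * w p.1 p.2) := by
  have h0 : ∀ p : Γ × Λ, 0 ≤ ‖f p.1‖ * w p.1 p.2 :=
    fun p => mul_nonneg (norm_nonneg _) (hw0 _ _)
  have h1 : ∀ γ : Γ, Summable (fun s : Λ => ‖f γ‖ * w γ s) :=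
    fun γ => (hwsum γ).mul_left ‖f γ‖
  have h2 : Summable (fun γ : Γ => ∑' s : Λ, ‖f γ‖ * w γ s) := by
    refine Summable.congr (hf.mul_right rY) (fun γ => ?_)
    rw [tsum_mul_left, hwtsum γ]
  exact (summable_prod_of_nonneg h0).2 ⟨h1, h2⟩

lemma colsum_summable_abstract (w : Γ → Λ → ℝ) (rY : ℝ)
    (hw0 : ∀ γ s, 0 ≤ w γ s) (hwsum : ∀ γ, Summable (w γ))
    (hwtsum : ∀ γ, (∑' s, w γ s) = rY)
    (f : Γ → ℂ) (hf : Summable fun γ => ‖f γ‖) :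
    Summable (fun s : Λ => ∑' γ : Γ, ‖f γ‖ * w γ s) := by
  have hprod := prod_summable_abstract w rY hw0 hwsum hwtsum f hf
  have hswap : Summable (fun p : Λ × Γ => ‖f p.2‖ * w p.2 p.1) :=
    ((Equiv.prodComm Λ Γ).summable_iff).2 hprod
  exact ((summable_prod_of_nonneg
    (fun p => mul_nonneg (norm_nonneg _) (hw0 _ _))).1 hswap).2

lemma l1_abstract (w : Γ → Λ → ℝ) (rY : ℝ) (hrY : 0 < rY)
    (hw0 : ∀ γ s, 0 ≤ w γ s) (hwsum : ∀ γ, Summable (w γ))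
    (hwtsum : ∀ γ, (∑' s, w γ s) = rY)
    (z : ℂ) (hz : ‖z‖ = rY⁻¹)
    (f : Γ → ℂ) (hf : Summable fun γ => ‖f γ‖) :
    Summable (fun s : Λ => ‖z * ∑' γ : Γ, f γ * ((w γ s : ℝ) : ℂ)‖)
      ∧ (∑' s : Λ, ‖z * ∑' γ : Γ, f γ * ((w γ s : ℝ) : ℂ)‖) ≤ ∑' γ : Γ, ‖f γ‖ := by
  have hprod := prod_summable_abstract w rY hw0 hwsum hwtsum f hf
  have hcolsum := colsum_summable_abstract w rY hw0 hwsum hwtsum f hf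
  have hrownorm : ∀ s : Λ, Summable (fun γ : Γ => ‖f γ‖ * w γ s) := by
    intro s
    refine Summable.comp_injective (i := fun γ : Γ => ((γ, s) : Γ × Λ)) hprod ?_
    intro a b hab
    exact (Prod.ext_iff.1 hab).1
  have hnormrw : ∀ (γ : Γ) (s : Λ), ‖f γ * ((w γ s : ℝ) : ℂ)‖ = ‖f γ‖ * w γ s := by
    intro γ s
    rw [norm_mul, Complex.norm_real, Real.norm_eq_abs, abs_of_nonneg (hw0 γ s)]
  have hbound : ∀ s : Λ, ‖z * ∑' γ : Γ, f γ * ((w γ s : ℝ) : ℂ)‖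
      ≤ rY⁻¹ * ∑' γ : Γ, ‖f γ‖ * w γ s := by
    intro s
    rw [norm_mul, hz]
    refine mul_le_mul_of_nonneg_left ?_ (inv_nonneg.2 hrY.le)
    refine le_trans (norm_tsum_le_tsum_norm ?_) (le_of_eq (tsum_congr fun γ => hnormrw γ s))
    exact Summable.congr (hrownorm s) (fun γ => (hnormrw γ s).symm)
  have hsummable : Summable (fun s : Λ => ‖z * ∑' γ : Γ, f γ * ((w γ s : ℝ) : ℂ)‖) := by
    refine Summable.of_nonneg_of_le (fun s => norm_nonneg _) hbound (hcolsum.mul_left _)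
  refine ⟨hsummable, ?_⟩
  calc (∑' s : Λ, ‖z * ∑' γ : Γ, f γ * ((w γ s : ℝ) : ℂ)‖)
      ≤ ∑' s : Λ, rY⁻¹ * ∑' γ : Γ, ‖f γ‖ * w γ s :=
        Summable.tsum_le_tsum hbound hsummable (hcolsum.mul_left _)
    _ = rY⁻¹ * ∑' s : Λ, ∑' γ : Γ, ‖f γ‖ * w γ s := tsum_mul_left
    _ = rY⁻¹ * ∑' γ : Γ, ∑' s : Λ, ‖f γ‖ * w γ s := by
        have hprod' : Summable (Function.uncurry (fun (γ : Γ) (s : Λ) => ‖f γ‖ * w γ s)) :=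
          hprod
        rw [Summable.tsum_comm' hprod' (fun γ => (hwsum γ).mul_left ‖f γ‖) hrownorm]
    _ = rY⁻¹ * ∑' γ : Γ, ‖f γ‖ * rY := by
        refine congrArg _ (tsum_congr fun γ => ?_)
        rw [tsum_mul_left, hwtsum γ]
    _ = rY⁻¹ * ((∑' γ : Γ, ‖f γ‖) * rY) := by rw [tsum_mul_right]
    _ = ∑' γ : Γ, ‖f γ‖ := by
        rw [mul_comm (∑' γ : Γ, ‖f γ‖) rY, ← mul_assoc, inv_mul_cancel₀ hrY.ne', one_mul]

lemma pairing_abstract (w : Γ → Λ → ℝ) (rY C : ℝ)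
    (hw0 : ∀ γ s, 0 ≤ w γ s) (hwsum : ∀ γ, Summable (w γ))
    (hwtsum : ∀ γ, (∑' s, w γ s) = rY)
    (z : ℂ) (f : Γ → ℂ) (hf : Summable fun γ => ‖f γ‖)
    (φ : Λ → ℂ) (hφ : ∀ s, ‖φ s‖ ≤ C) :
    (∑' γ : Γ, (z * ∑' s : Λ, φ s * ((w γ s : ℝ) : ℂ)) * f γ)
      = ∑' s : Λ, φ s * (z * ∑' γ : Γ, f γ * ((w γ s : ℝ) : ℂ)) := by
  have hprod := prod_summable_abstract w rY hw0 hwsum hwtsum f hf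
  set G : Γ → Λ → ℂ := fun γ s => φ s * ((w γ s : ℝ) : ℂ) * f γ with hGdef
  have hGnorm : ∀ (γ : Γ) (s : Λ), ‖G γ s‖ ≤ C * (‖f γ‖ * w γ s) := by
    intro γ s
    rw [hGdef]
    simp only
    rw [norm_mul, norm_mul, Complex.norm_real, Real.norm_eq_abs, abs_of_nonneg (hw0 γ s)]
    nlinarith [mul_nonneg (mul_nonneg (sub_nonneg.2 (hφ s)) (hw0 γ s)) (norm_nonneg (f γ)),
      hw0 γ s, norm_nonneg (f γ), norm_nonneg (φ s)]
  have hGuncur : Summable (fun p : Γ × Λ => G p.1 p.2) :=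
    Summable.of_norm_bounded (hprod.mul_left C) (fun p => hGnorm p.1 p.2)
  have hGrow : ∀ γ : Γ, Summable (G γ) := by
    intro γ
    refine Summable.comp_injective (i := fun s : Λ => ((γ, s) : Γ × Λ)) hGuncur ?_
    intro a b' hab
    exact (Prod.ext_iff.1 hab).2
  have hGcol : ∀ s : Λ, Summable (fun γ : Γ => G γ s) := by
    intro s
    refine Summable.comp_injective (i := fun γ : Γ => ((γ, s) : Γ × Λ)) hGuncur ?_
    intro a b' hab
    exact (Prod.ext_iff.1 hab).1
  have hGuncur' : Summable (Function.uncurry G) := hGuncur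
  have hcore : (∑' s : Λ, ∑' γ : Γ, G γ s) = ∑' γ : Γ, ∑' s : Λ, G γ s :=
    Summable.tsum_comm' hGuncur' hGrow hGcol
  calc (∑' γ : Γ, (z * ∑' s : Λ, φ s * ((w γ s : ℝ) : ℂ)) * f γ)
      = ∑' γ : Γ, z * ∑' s : Λ, G γ s := by
        refine tsum_congr fun γ => ?_
        rw [mul_assoc]
        congr 1
        rw [← tsum_mul_right]
    _ = z * ∑' γ : Γ, ∑' s : Λ, G γ s := tsum_mul_left
    _ = z * ∑' s : Λ, ∑' γ : Γ, G γ s := by rw [hcore]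
    _ = ∑' s : Λ, φ s * (z * ∑' γ : Γ, f γ * ((w γ s : ℝ) : ℂ)) := by
        rw [← tsum_mul_left]
        refine tsum_congr fun s => ?_
        rw [mul_left_comm]
        congr 1
        rw [← tsum_mul_left]
        refine tsum_congr fun γ => ?_
        rw [hGdef]
        ring

end abstractL1

lemma norm_le_of_mem_B2 {G : Type*} [Group G] {u : G → ℂ} {b : ℝ}
    (hb : b ∈ B2BoundSet u) (g : G) : ‖u g‖ ≤ b := by
  obtain ⟨H, hN, hI, ξ, η, A, B, hA, hB, rfl, hrep⟩ := hb
  have h1 : u g = (inner ℂ (η 1) (ξ g) : ℂ) := by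
    have := hrep g 1
    rwa [inv_one, one_mul] at this
  rw [h1]
  calc ‖(inner ℂ (η 1) (ξ g) : ℂ)‖ ≤ ‖η 1‖ * ‖ξ g‖ := norm_inner_le_norm _ _
    _ ≤ B * A := mul_le_mul (hB 1) (hA g) (norm_nonneg _) (le_trans (norm_nonneg _) (hB 1))
    _ = A * B := mul_comm B A

lemma zero_mem_B2' {G : Type*} [Group G] :
    ∃ b ∈ B2BoundSet (fun _ : G => (0 : ℂ)), b ≤ 1 := by
  refine ⟨0, ⟨ℂ, inferInstance, inferInstance, fun _ => 0, fun _ => 0, 0, 0,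
    fun s => by simp, fun t => by simp, by simp, fun s t => by simp⟩, zero_le_one⟩

lemma qnorm_set_bound {G : Type*} [Group G] (f : G → ℂ) (hf : Summable fun g => ‖f g‖) :
    ∀ r ∈ {r | ∃ u : G → ℂ, (∃ b ∈ B2BoundSet u, b ≤ 1) ∧ r = ‖∑' s : G, f s * u s‖},
      r ≤ ∑' g : G, ‖f g‖ := by
  rintro r ⟨u, ⟨b0, hb0, hb1⟩, rfl⟩
  have hu : ∀ g, ‖u g‖ ≤ 1 := fun g => (norm_le_of_mem_B2 hb0 g).trans hb1
  have hptle : ∀ g : G, ‖f g * u g‖ ≤ ‖f g‖ := by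
    intro g
    rw [norm_mul]
    exact mul_le_of_le_one_right (norm_nonneg _) (hu g)
  have hsum : Summable (fun g : G => ‖f g * u g‖) :=
    Summable.of_nonneg_of_le (fun _ => norm_nonneg _) hptle hf
  calc ‖∑' s : G, f s * u s‖ ≤ ∑' s : G, ‖f s * u s‖ := norm_tsum_le_tsum_norm hsum
    _ ≤ ∑' g : G, ‖f g‖ := Summable.tsum_le_tsum hptle hsum hf

theorem dualInducedMap_mem_l1_pairing_and_QNorm_le
    {Ω : Type*} [MeasurableSpace Ω] (m : Measure Ω) [SigmaFinite m]
    {Γ Λ : Type*} [Group Γ] [Countable Γ] [Group Λ] [Countable Λ]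
    [MulAction Γ Ω] [MulAction Λ Ω]
    (hΓ : ∀ γ : Γ, MeasurePreserving (fun ω => γ • ω) m m)
    (hΛ : ∀ s : Λ, MeasurePreserving (fun ω => s • ω) m m)
    (hcomm : ∀ (γ : Γ) (s : Λ) (ω : Ω), γ • s • ω = s • γ • ω)
    (Y : Set Ω) (hY : IsFundamentalDomain Λ Y m)
    (hYpos : 0 < m Y) (hYfin : m Y < ⊤)
    (f : Γ → ℂ) (hf : Summable fun γ : Γ => ‖f γ‖) :
    -- `Φ*(f) ∈ ℓ¹(Λ)` with `‖Φ*(f)‖₁ ≤ ‖f‖₁`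
    (Summable fun s : Λ => ‖(dualInducedMap m Y f : Λ → ℂ) s‖) ∧
    ((∑' s : Λ, ‖(dualInducedMap m Y f : Λ → ℂ) s‖) ≤ ∑' γ : Γ, ‖f γ‖) ∧
    -- `Σ_γ φ̂(γ) f(γ) = Σ_s φ(s) Φ*(f)(s)` for every bounded `φ : Λ → ℂ`
    (∀ (φ : Λ → ℂ) (C : ℝ), (∀ s, ‖φ s‖ ≤ C) →
      (∑' γ : Γ, inducedMultiplier m Y φ γ * f γ) = ∑' s : Λ, φ s * (dualInducedMap m Y f : Λ → ℂ) s) ∧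
    -- `‖Φ*(f)‖_{Q(Λ)} ≤ ‖f‖_{Q(Γ)}`
    QNorm (dualInducedMap m Y f : Λ → ℂ) ≤ QNorm f := by
  have hrYpos : 0 < (m Y).toReal := ENNReal.toReal_pos hYpos.ne' hYfin.ne
  have hw0 : ∀ (γ : Γ) (s : Λ), 0 ≤ (m ((γ • (s • Y)) ∩ Y)).toReal :=
    fun _ _ => ENNReal.toReal_nonneg
  have hwsum : ∀ γ : Γ, Summable (fun s : Λ => (m ((γ • (s • Y)) ∩ Y)).toReal) :=
    fun γ => ENNReal.summable_toReal (by rw [K2 hΓ hΛ hcomm hY γ]; exact hYfin.ne)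
  have hwtsum : ∀ γ : Γ, (∑' s : Λ, (m ((γ • (s • Y)) ∩ Y)).toReal) = (m Y).toReal := by
    intro γ
    rw [← ENNReal.tsum_toReal_eq
      (fun s => ((measure_mono Set.inter_subset_right).trans_lt hYfin).ne)]
    rw [K2 hΓ hΛ hcomm hY γ]
  have hz : ‖(((((m Y).toReal))⁻¹ : ℝ) : ℂ)‖ = ((m Y).toReal)⁻¹ := by
    rw [Complex.norm_real, Real.norm_eq_abs, abs_of_nonneg (inv_nonneg.2 ENNReal.toReal_nonneg)]
  have hl1 := l1_abstract (fun (γ : Γ) (s : Λ) => (m ((γ • (s • Y)) ∩ Y)).toReal)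
    ((m Y).toReal) hrYpos hw0 hwsum hwtsum _ hz f hf
  have part1 : Summable fun s : Λ => ‖(dualInducedMap m Y f : Λ → ℂ) s‖ := hl1.1
  have part2 : (∑' s : Λ, ‖(dualInducedMap m Y f : Λ → ℂ) s‖) ≤ ∑' γ : Γ, ‖f γ‖ := hl1.2
  have part3 : ∀ (φ : Λ → ℂ) (C : ℝ), (∀ s, ‖φ s‖ ≤ C) →
      (∑' γ : Γ, inducedMultiplier m Y φ γ * f γ)
        = ∑' s : Λ, φ s * (dualInducedMap m Y f : Λ → ℂ) s := by
    intro φ C hφ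
    exact pairing_abstract (fun (γ : Γ) (s : Λ) => (m ((γ • (s • Y)) ∩ Y)).toReal)
      ((m Y).toReal) C hw0 hwsum hwtsum _ f hf φ hφ
  refine ⟨part1, part2, part3, ?_⟩
  -- part 4
  have hbddf : BddAbove {r | ∃ u : Γ → ℂ,
      (∃ b ∈ B2BoundSet u, b ≤ 1) ∧ r = ‖∑' s : Γ, f s * u s‖} :=
    ⟨∑' γ : Γ, ‖f γ‖, fun r hr => qnorm_set_bound f hf r hr⟩
  have h0mem : (0 : ℝ) ∈ {r | ∃ u : Γ → ℂ,
      (∃ b ∈ B2BoundSet u, b ≤ 1) ∧ r = ‖∑' s : Γ, f s * u s‖} :=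
    ⟨fun _ => 0, zero_mem_B2', by simp⟩
  have hQf0 : 0 ≤ QNorm f := le_csSup hbddf h0mem
  rw [QNorm]
  refine Real.sSup_le ?_ hQf0
  rintro r ⟨u, ⟨b0, hb0, hb1⟩, rfl⟩
  have hmem2 : b0 ∈ B2BoundSet (inducedMultiplier m (Γ := Γ) Y u) :=
    induced_mem_B2 hΓ hΛ hcomm hY hYpos hYfin u hb0
  have hu1 : ∀ s : Λ, ‖u s‖ ≤ 1 := fun s => (norm_le_of_mem_B2 hb0 s).trans hb1
  have hpair := part3 u 1 hu1
  have hval : ‖∑' s : Λ, (dualInducedMap m Y f : Λ → ℂ) s * u s‖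
      = ‖∑' γ : Γ, f γ * inducedMultiplier m (Γ := Γ) Y u γ‖ := by
    rw [show (∑' s : Λ, (dualInducedMap m Y f : Λ → ℂ) s * u s)
        = ∑' s : Λ, u s * (dualInducedMap m Y f : Λ → ℂ) s from
      tsum_congr fun s => mul_comm _ _, ← hpair]
    congr 1
    exact tsum_congr fun γ => mul_comm _ _
  rw [hval]
  exact le_csSup hbddf ⟨inducedMultiplier m (Γ := Γ) Y u, ⟨b0, hmem2, hb1⟩, rfl⟩
end

section
/- Let Γ and Λ be countable discrete groups acting on a σ-finite measure space (Ω, m) by commuting measure-preserving measurable actions, and let Y ⊆ Ω be a measurable fundamental domain for the Λ-action with 0 < m(Y) < ∞. Let (φ_i) be a net of Herz-Schur multipliers on Λ and φ a Herz-Schur multiplier on Λ such that ⟨φ_i, f⟩ → ⟨φ, f⟩ for every f ∈ Q(Λ). Then the induced Herz-Schur multipliers φ̂_i on Γ, φ̂_i(γ) = (1/m(Y)) Σ_{s∈Λ} φ_i(s) m(γ(sY) ∩ Y), satisfy ⟨φ̂_i, g⟩ → ⟨φ̂, g⟩ for every g ∈ Q(Γ); that is, the induction map Φ : B₂(Λ)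 → B₂(Γ), Φ(φ) = φ̂, is σ(B₂(Λ), Q(Λ))-to-σ(B₂(Γ), Q(Γ)) continuous. -/
open MeasureTheory Filter
set_option linter.unusedSectionVars false
set_option maxHeartbeats 2000000
open scoped Pointwise ENNReal

/-- A sequence of `ℓ¹`-functions which is Cauchy in the `Q(G)`-norm; such sequences
represent the elements of the completion `Q(G)` of `ℓ¹(G)`. -/
def QCauchy {G : Type*} [Group G] (f : ℕ → G → ℂ) : Prop :=
  (∀ n, Summable fun s : G => ‖f n s‖) ∧
    ∀ ε : ℝ, 0 < ε → ∃ N : ℕ, ∀ p ≥ N, ∀ q ≥ N,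
      QNorm (fun s : G => f p s - f q s) < ε

/-- `φ_i → φ` in the `σ(B₂(G), Q(G))`-topology: for every element of `Q(G)`, represented by a
`Q`-Cauchy sequence `(f_n)` in `ℓ¹(G)`, the pairings `⟨φ_i, f⟩ = lim_n Σ_s φ_i(s) f_n(s)`
converge to `⟨φ, f⟩ = lim_n Σ_s φ(s) f_n(s)` along the net. -/
def TendstoSigmaB2Q {G : Type*} [Group G] {ι : Type*} (l : Filter ι)
    (φnet : ι → G → ℂ) (φ : G → ℂ) : Prop :=
  ∀ f : ℕ → G → ℂ, QCauchy f → ∀ (b : ι → ℂ) (b₀ : ℂ),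
    (∀ i, Tendsto (fun n => ∑' s : G, φnet i s * f n s) atTop (nhds (b i))) →
    Tendsto (fun n => ∑' s : G, φ s * f n s) atTop (nhds b₀) →
    Tendsto b l (nhds b₀)

section HSBasic

variable {G : Type*} [Group G]

lemma B2BoundSet.norm_le {φ : G → ℂ} {C : ℝ} (hC : C ∈ B2BoundSet φ) :
    0 ≤ C ∧ ∀ r : G, ‖φ r‖ ≤ C := by
  obtain ⟨H, _, _, ξ, η, A, B, hA, hB, rfl, hrep⟩ := hC
  have hA0 : 0 ≤ A := le_trans (norm_nonneg _) (hA 1)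
  have hB0 : 0 ≤ B := le_trans (norm_nonneg _) (hB 1)
  refine ⟨mul_nonneg hA0 hB0, fun r => ?_⟩
  have h : φ r = inner ℂ (η 1) (ξ r) := by simpa using hrep r 1
  rw [h]
  calc ‖(inner ℂ (η 1) (ξ r) : ℂ)‖ ≤ ‖η 1‖ * ‖ξ r‖ := norm_inner_le_norm _ _
    _ ≤ B * A := mul_le_mul (hB 1) (hA r) (norm_nonneg _) hB0
    _ = A * B := mul_comm _ _

lemma zero_mem_B2BoundSet : (0 : ℝ) ∈ B2BoundSet (fun _ : G => (0 : ℂ)) :=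
  ⟨ℂ, inferInstance, inferInstance, 0, 0, 0, 0, fun _ => by simp, fun _ => by simp,
    (zero_mul 0).symm, fun s t => by simp⟩

/-- The set of pairing values appearing in the definition of `QNorm`. -/
def QNormSet (f : G → ℂ) : Set ℝ :=
  {r | ∃ u : G → ℂ, (∃ b ∈ B2BoundSet u, b ≤ 1) ∧ r = ‖∑' s : G, f s * u s‖}

lemma QNorm_eq_sSup (f : G → ℂ) : QNorm f = sSup (QNormSet f) := rfl

lemma zero_mem_QNormSet (f : G → ℂ) : (0 : ℝ) ∈ QNormSet f :=
  ⟨fun _ => 0, ⟨0, zero_mem_B2BoundSet, zero_le_one⟩, by simp⟩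

lemma QNormSet_le {f : G → ℂ} (hf : Summable fun s => ‖f s‖) :
    ∀ r ∈ QNormSet f, r ≤ ∑' s, ‖f s‖ := by
  rintro r ⟨u, ⟨b, hb, hb1⟩, rfl⟩
  obtain ⟨hb0, hub⟩ := B2BoundSet.norm_le hb
  have hle : ∀ s, ‖f s * u s‖ ≤ ‖f s‖ := fun s => by
    rw [norm_mul]
    exact mul_le_of_le_one_right (norm_nonneg _) ((hub s).trans hb1)
  have hsum : Summable fun s => ‖f s * u s‖ :=
    Summable.of_nonneg_of_le (fun s => norm_nonneg _) hle hf
  exact (norm_tsum_le_tsum_norm hsum).trans (hsum.tsum_le_tsum hle hf)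

lemma QNormSet_bddAbove {f : G → ℂ} (hf : Summable fun s => ‖f s‖) :
    BddAbove (QNormSet f) :=
  ⟨∑' s, ‖f s‖, QNormSet_le hf⟩

lemma le_QNorm {f : G → ℂ} (hf : Summable fun s => ‖f s‖) {r : ℝ}
    (hr : r ∈ QNormSet f) : r ≤ QNorm f :=
  le_csSup (QNormSet_bddAbove hf) hr

lemma QNorm_nonneg {f : G → ℂ} (hf : Summable fun s => ‖f s‖) : 0 ≤ QNorm f :=
  le_QNorm hf (zero_mem_QNormSet f)

lemma QNorm_le {f : G → ℂ} {a : ℝ} (h : ∀ r ∈ QNormSet f, r ≤ a) (ha : 0 ≤ a) :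
    QNorm f ≤ a :=
  Real.sSup_le h ha

end HSBasic

section MeasureAux

variable {Ω : Type*} [MeasurableSpace Ω] {m : Measure Ω}
  {Γ Λ : Type*} [Group Γ] [Countable Γ] [Group Λ] [Countable Λ]
  [MulAction Γ Ω] [MulAction Λ Ω]
  [MeasurableSpace Γ] [MeasurableSpace Λ]
  [MeasurableSMul Γ Ω] [MeasurableSMul Λ Ω]
  [SMulInvariantMeasure Γ Ω m] [SMulInvariantMeasure Λ Ω m]
  [SMulCommClass Γ Λ Ω] [SMulCommClass Λ Γ Ω]
  {Y : Set Ω}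

/-- Translation by a group element preserves a.e.-equality of sets. -/
lemma smul_set_ae_eq {G' : Type*} [Group G'] [MulAction G' Ω] [MeasurableSpace G']
    [MeasurableSMul G' Ω] [SMulInvariantMeasure G' Ω m]
    (g : G') {S T : Set Ω} (h : S =ᵐ[m] T) : (g • S : Set Ω) =ᵐ[m] (g • T : Set Ω) := by
  rw [MeasureTheory.ae_eq_set] at h ⊢
  rw [← Set.smul_set_sdiff, ← Set.smul_set_sdiff, measure_smul, measure_smul]
  exact h

/-- Key measure identity: the translates `γ • (s • Y)` of a fundamental domain slice up `Y`
with total mass `m Y`. -/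
lemma tsum_measure_smul_inter (hY : IsFundamentalDomain Λ Y m) (γ : Γ) :
    ∑' s : Λ, m ((γ • (s • Y)) ∩ Y) = m Y := by
  have h1 : ∀ s : Λ, (γ • (s • Y) : Set Ω) = s • (γ • Y) := fun s => smul_comm γ s Y
  calc ∑' s : Λ, m ((γ • (s • Y)) ∩ Y) = ∑' s : Λ, m (Y ∩ s • (γ • Y)) := by
        refine tsum_congr fun s => ?_
        rw [h1 s, Set.inter_comm]
    _ = m Y := ((hY.smul_of_comm γ).measure_eq_tsum' Y).symm

lemma measure_smul_inter_ne_top (hYfin : m Y ≠ ⊤) (γ : Γ) (s : Λ) :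
    m ((γ • (s • Y)) ∩ Y) ≠ ⊤ :=
  ((measure_mono Set.inter_subset_right).trans_lt hYfin.lt_top).ne

lemma summable_wt (hY : IsFundamentalDomain Λ Y m) (hYfin : m Y ≠ ⊤) (γ : Γ) :
    Summable fun s : Λ => (m ((γ • (s • Y)) ∩ Y)).toReal :=
  ENNReal.summable_toReal (by rw [tsum_measure_smul_inter hY γ]; exact hYfin)

lemma tsum_wt (hY : IsFundamentalDomain Λ Y m) (hYfin : m Y ≠ ⊤) (γ : Γ) :
    ∑' s : Λ, (m ((γ • (s • Y)) ∩ Y)).toReal = (m Y).toReal := by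
  rw [← ENNReal.tsum_toReal_eq (fun s => measure_smul_inter_ne_top hYfin γ s),
    tsum_measure_smul_inter hY γ]

/-- The rearrangement identity behind induction of Herz-Schur multipliers. -/
lemma tsum_measure_piece (hY : IsFundamentalDomain Λ Y m) (α β : Γ) (r : Λ) :
    ∑' t : Λ, m ((Y ∩ α • ((t * r) • Y)) ∩ β • (t • Y))
      = m (((β⁻¹ * α) • (r • Y)) ∩ Y) := by
  have hterm : ∀ t : Λ, m ((Y ∩ α • ((t * r) • Y)) ∩ β • (t • Y))
      = m ((((β⁻¹ * α) • (r • Y)) ∩ Y) ∩ t⁻¹ • (β⁻¹ • Y)) := by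
    intro t
    rw [← measure_smul (μ := m) β⁻¹ ((Y ∩ α • ((t * r) • Y)) ∩ β • (t • Y))]
    rw [← measure_smul (μ := m) t⁻¹
      (β⁻¹ • ((Y ∩ α • ((t * r) • Y)) ∩ β • (t • Y)))]
    congr 1
    have e1 : (β⁻¹ • ((Y ∩ α • ((t * r) • Y)) ∩ β • (t • Y)) : Set Ω)
        = (β⁻¹ • Y ∩ (β⁻¹ * α) • ((t * r) • Y)) ∩ t • Y := by
      rw [Set.smul_set_inter, Set.smul_set_inter, inv_smul_smul, ← mul_smul]
    rw [e1]
    have e2 : ((β⁻¹ * α) • ((t * r) • Y) : Set Ω) = t • ((β⁻¹ * α) • (r • Y)) := by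
      rw [mul_smul t r Y, smul_comm]
    rw [e2]
    simp only [Set.smul_set_inter, inv_smul_smul]
    ext ω
    simp only [Set.mem_inter_iff]
    tauto
  calc ∑' t : Λ, m ((Y ∩ α • ((t * r) • Y)) ∩ β • (t • Y))
      = ∑' t : Λ, m ((((β⁻¹ * α) • (r • Y)) ∩ Y) ∩ t⁻¹ • (β⁻¹ • Y)) :=
        tsum_congr hterm
    _ = ∑' t : Λ, m ((((β⁻¹ * α) • (r • Y)) ∩ Y) ∩ t • (β⁻¹ • Y)) :=
        (Equiv.inv Λ).tsum_eq fun t : Λ =>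
          m ((((β⁻¹ * α) • (r • Y)) ∩ Y) ∩ t • (β⁻¹ • Y))
    _ = m (((β⁻¹ * α) • (r • Y)) ∩ Y) :=
        ((hY.smul_of_comm β⁻¹).measure_eq_tsum' _).symm

end MeasureAux

section Induction

variable {Ω : Type*} [MeasurableSpace Ω] {m : Measure Ω}
  {Γ Λ : Type*} [Group Γ] [Countable Γ] [Group Λ] [Countable Λ]
  [MulAction Γ Ω] [MulAction Λ Ω]
  [MeasurableSpace Γ] [MeasurableSpace Λ]
  [MeasurableSMul Γ Ω] [MeasurableSMul Λ Ω]
  [SMulInvariantMeasure Γ Ω m] [SMulInvariantMeasure Λ Ω m]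
  [SMulCommClass Γ Λ Ω] [SMulCommClass Λ Γ Ω]
  {Y : Set Ω}

/-- The induction theorem: any Herz-Schur bound for `u : Λ → ℂ` is also a Herz-Schur bound
for the induced multiplier on `Γ`. -/
theorem induced_mem_B2BoundSet
    (hY : IsFundamentalDomain Λ Y m) (hYpos : m Y ≠ 0) (hYfin : m Y ≠ ⊤)
    {u : Λ → ℂ} {C : ℝ} (hC : C ∈ B2BoundSet u) :
    C ∈ B2BoundSet (fun γ : Γ => inducedMultiplier m Y u γ) := by
  classical
  obtain ⟨H₀, i1, i2, ξ, η, A, B, hA, hB, hCAB, hu⟩ := hC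
  have hA0 : 0 ≤ A := le_trans (norm_nonneg _) (hA 1)
  have hB0 : 0 ≤ B := le_trans (norm_nonneg _) (hB 1)
  obtain ⟨eΓ, heΓ⟩ := exists_injective_nat Γ
  obtain ⟨eΛ, heΛ⟩ := exists_injective_nat Λ
  -- measurable version of `Y`
  set Y₀ : Set Ω := toMeasurable m Y with hY₀def
  have hY₀meas : MeasurableSet Y₀ := measurableSet_toMeasurable m Y
  have hY₀ae : Y₀ =ᵐ[m] Y := hY.nullMeasurableSet.toMeasurable_ae_eq
  have hmY₀ : m Y₀ = m Y := measure_congr hY₀ae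
  have hY₀pos : m Y₀ ≠ 0 := by rw [hmY₀]; exact hYpos
  have hY₀fin : m Y₀ ≠ ⊤ := by rw [hmY₀]; exact hYfin
  have hfd₀ : IsFundamentalDomain Λ Y₀ m := by
    refine ⟨hY₀meas.nullMeasurableSet, hY.ae_covers.mono ?_, ?_⟩
    · rintro ω ⟨s, hs⟩; exact ⟨s, subset_toMeasurable m Y hs⟩
    · intro s t hst
      have h1 : ((s • Y₀ ∩ t • Y₀ : Set Ω)) =ᵐ[m] ((s • Y ∩ t • Y : Set Ω)) :=
        MeasureTheory.ae_eq_set_inter (smul_set_ae_eq s hY₀ae) (smul_set_ae_eq t hY₀ae)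
      show m _ = 0
      rw [measure_congr h1]
      exact hY.aedisjoint hst
  -- a.e. disjointness of the translates `γ • (s • Y₀)`
  have hdisjΓ : ∀ (γ : Γ) (s t : Λ), s ≠ t →
      m ((γ • (s • Y₀) : Set Ω) ∩ (γ • (t • Y₀) : Set Ω)) = 0 := by
    intro γ s t hst
    rw [smul_comm γ s Y₀, smul_comm γ t Y₀]
    exact (hfd₀.smul_of_comm γ).aedisjoint hst
  -- the coding map χ : Ω → (ℕ → ℕ)
  set Cset : Γ → ℕ → Set Ω := fun γ k => ⋃ (s : Λ) (_ : eΛ s = k), (γ • (s • Y₀) : Set Ω)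
    with hCset
  have hCmeas : ∀ γ k, MeasurableSet (Cset γ k) := fun γ k =>
    MeasurableSet.iUnion fun s => MeasurableSet.iUnion fun _ =>
      (hY₀meas.const_smul s).const_smul γ
  set D : Γ → Ω → ℕ := fun γ ω => sInf {k | ω ∈ Cset γ k} with hD
  have hDmeas : ∀ γ, Measurable (D γ) := by
    intro γ
    apply measurable_to_countable'
    intro n
    rcases Nat.eq_zero_or_pos n with rfl | hn
    · have hset : D γ ⁻¹' {0} = Cset γ 0 ∪ ⋂ j : ℕ, (Cset γ j)ᶜ := by
        ext ω
        simp only [Set.mem_preimage, Set.mem_singleton_iff, Set.mem_union, Set.mem_iInter,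
          Set.mem_compl_iff, hD]
        constructor
        · intro h0
          by_cases hne : {k | ω ∈ Cset γ k}.Nonempty
          · left; have := Nat.sInf_mem hne; rwa [h0] at this
          · right; intro j hj; exact hne ⟨j, hj⟩
        · rintro (h | h)
          · exact Nat.sInf_eq_zero.mpr (Or.inl h)
          · exact Nat.sInf_eq_zero.mpr
              (Or.inr (Set.eq_empty_iff_forall_notMem.mpr h))
      rw [hset]
      exact (hCmeas γ 0).union (MeasurableSet.iInter fun j => (hCmeas γ j).compl)
    · have hset : D γ ⁻¹' {n} = Cset γ n ∩ ⋂ (j : ℕ) (_ : j < n), (Cset γ j)ᶜ := by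
        ext ω
        simp only [Set.mem_preimage, Set.mem_singleton_iff, Set.mem_inter_iff, Set.mem_iInter,
          Set.mem_compl_iff, hD]
        constructor
        · intro h0
          have hne : {k | ω ∈ Cset γ k}.Nonempty := by
            by_contra hne
            rw [Set.not_nonempty_iff_eq_empty] at hne
            rw [hne, Nat.sInf_empty] at h0
            omega
          refine ⟨?_, ?_⟩
          · have := Nat.sInf_mem hne; rwa [h0] at this
          · intro j hj
            rw [← h0] at hj
            exact Nat.notMem_of_lt_sInf hj
        · rintro ⟨h1, h2⟩
          exact le_antisymm (Nat.sInf_le h1)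
            (le_of_not_gt fun hlt => h2 _ hlt
              (Nat.sInf_mem (⟨n, h1⟩ : {k | ω ∈ Cset γ k}.Nonempty)))
      rw [hset]
      exact (hCmeas γ n).inter
        (MeasurableSet.iInter fun j => MeasurableSet.iInter fun _ => (hCmeas γ j).compl)
  set χ : Ω → (ℕ → ℕ) := fun ω n => if h : ∃ γ : Γ, eΓ γ = n then D h.choose ω else 0 with hχdef
  have hχmeas : Measurable χ := by
    apply measurable_pi_lambda
    intro n
    by_cases h : ∃ γ : Γ, eΓ γ = n
    · simpa only [hχdef, dif_pos h] using hDmeas h.choose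
    · simpa only [hχdef, dif_neg h] using (measurable_const : Measurable fun _ : Ω => (0 : ℕ))
  -- key coding property
  have hχprop : ∀ (γ : Γ) (s : Λ), ∀ᵐ ω ∂m,
      ω ∈ (γ • (s • Y₀) : Set Ω) → χ ω (eΓ γ) = eΛ s := by
    intro γ s
    have hbad : m (⋃ (t : Λ) (_ : t ≠ s),
        ((γ • (s • Y₀) : Set Ω) ∩ (γ • (t • Y₀) : Set Ω))) = 0 :=
      measure_iUnion_null fun t => measure_iUnion_null fun hts => hdisjΓ γ s t (Ne.symm hts)
    filter_upwards [measure_eq_zero_iff_ae_notMem.mp hbad] with ω hω hmem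
    have huniq : ∀ t : Λ, ω ∈ (γ • (t • Y₀) : Set Ω) → t = s := by
      intro t ht
      by_contra hts
      exact hω (Set.mem_iUnion.mpr ⟨t, Set.mem_iUnion.mpr ⟨hts, ⟨hmem, ht⟩⟩⟩)
    have hex : ∃ γ' : Γ, eΓ γ' = eΓ γ := ⟨γ, rfl⟩
    have hch : hex.choose = γ := heΓ hex.choose_spec
    have hset : {k | ω ∈ Cset γ k} = {eΛ s} := by
      ext k
      simp only [Set.mem_setOf_eq, Set.mem_singleton_iff, hCset, Set.mem_iUnion]
      constructor
      · rintro ⟨t, ht, htw⟩; rw [← ht, huniq t htw]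
      · rintro rfl; exact ⟨s, rfl, hmem⟩
    simp only [hχdef, dif_pos hex, hch, hD, hset, csInf_singleton]
  -- the induced Hilbert space
  set μ' : Measure (ℕ → ℕ) := (m Y₀)⁻¹ • Measure.map χ (m.restrict Y₀) with hμ'
  haveI : IsProbabilityMeasure μ' := by
    constructor
    rw [hμ', Measure.smul_apply, Measure.map_apply hχmeas MeasurableSet.univ,
      Set.preimage_univ, Measure.restrict_apply_univ, smul_eq_mul]
    exact ENNReal.inv_mul_cancel hY₀pos hY₀fin
  letI := i1
  letI := i2
  set dec : ℕ → Λ := fun k => if h : ∃ s : Λ, eΛ s = k then h.choose else 1 with hdec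
  have hdecΛ : ∀ s : Λ, dec (eΛ s) = s := by
    intro s
    have hex : ∃ t : Λ, eΛ t = eΛ s := ⟨s, rfl⟩
    simp only [hdec, dif_pos hex]
    exact heΛ hex.choose_spec
  letI : MeasurableSpace H₀ := borel H₀
  haveI : BorelSpace H₀ := ⟨rfl⟩
  set Gf : (Λ → H₀) → Γ → (ℕ → ℕ) → H₀ := fun v γ x => v (dec (x (eΓ γ))) with hGf
  have hGsm : ∀ (v : Λ → H₀) (γ : Γ), StronglyMeasurable (Gf v γ) := by
    intro v γ
    rw [stronglyMeasurable_iff_measurable_separable]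
    constructor
    · exact (measurable_of_countable (fun k => v (dec k))).comp (measurable_pi_apply (eΓ γ))
    · exact ((Set.countable_range fun k : ℕ => v (dec k)).isSeparable).mono
        (Set.range_comp_subset_range (fun x : ℕ → ℕ => x (eΓ γ)) (fun k => v (dec k)))
  have hmemξ : ∀ γ : Γ, MemLp (Gf ξ γ) 2 μ' := fun γ =>
    MemLp.of_bound (hGsm ξ γ).aestronglyMeasurable A
      (Filter.Eventually.of_forall fun x => hA _)
  have hmemη : ∀ γ : Γ, MemLp (Gf η γ) 2 μ' := fun γ =>
    MemLp.of_bound (hGsm η γ).aestronglyMeasurable B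
      (Filter.Eventually.of_forall fun x => hB _)
  set ξh : Γ → Lp H₀ 2 μ' := fun γ => (hmemξ γ).toLp _ with hξh
  set ηh : Γ → Lp H₀ 2 μ' := fun γ => (hmemη γ).toLp _ with hηh
  have hnorm : ∀ (v : Λ → H₀) (c : ℝ), 0 ≤ c → (∀ t, ‖v t‖ ≤ c) → ∀ (γ : Γ)
      (hm : MemLp (Gf v γ) 2 μ'), ‖hm.toLp _‖ ≤ c := by
    intro v c h0 hv γ hm
    rw [Lp.norm_toLp]
    have hle := eLpNorm_le_of_ae_bound (μ := μ') (p := 2) (f := Gf v γ)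
      (Filter.Eventually.of_forall fun x => hv _)
    calc (eLpNorm (Gf v γ) 2 μ').toReal ≤ (ENNReal.ofReal c).toReal :=
          ENNReal.toReal_mono ENNReal.ofReal_ne_top
            (by simpa [measure_univ] using hle)
      _ = c := ENNReal.toReal_ofReal h0
  -- key computation of inner products
  have hkey : ∀ a b : Γ, (inner ℂ (ηh b) (ξh a) : ℂ) = inducedMultiplier m Y u (b⁻¹ * a) := by
    intro a b
    have h1 : (inner ℂ (ηh b) (ξh a) : ℂ)
        = ∫ x, (inner ℂ (Gf η b x) (Gf ξ a x) : ℂ) ∂μ' := by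
      simp only [hηh, hξh]
      rw [MeasureTheory.L2.inner_def]
      refine integral_congr_ae ?_
      filter_upwards [MemLp.coeFn_toLp (hmemη b), MemLp.coeFn_toLp (hmemξ a)] with x e1 e2
      rw [e1, e2]
    have hsm2 : StronglyMeasurable fun x : ℕ → ℕ => (inner ℂ (Gf η b x) (Gf ξ a x) : ℂ) :=
      (hGsm η b).inner (hGsm ξ a)
    have h2 : ∫ x, (inner ℂ (Gf η b x) (Gf ξ a x) : ℂ) ∂μ'
        = ((m Y₀).toReal)⁻¹ • ∫ ω in Y₀, (inner ℂ (Gf η b (χ ω)) (Gf ξ a (χ ω)) : ℂ) ∂m := by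
      rw [hμ', integral_smul_measure,
        integral_map hχmeas.aemeasurable hsm2.aestronglyMeasurable, ENNReal.toReal_inv]
    -- the pieces
    set P : Λ × Λ → Set Ω :=
      fun p => ((Y₀ ∩ (a • (p.1 • Y₀) : Set Ω)) ∩ (b • (p.2 • Y₀) : Set Ω)) with hP
    have hPmeas : ∀ p, MeasurableSet (P p) := fun p =>
      (hY₀meas.inter ((hY₀meas.const_smul p.1).const_smul a)).inter
        ((hY₀meas.const_smul p.2).const_smul b)
    have hPsub : ∀ p, P p ⊆ Y₀ := fun p x hx => hx.1.1
    have hcov : (Y₀ : Set Ω) =ᵐ[m] ⋃ p : Λ × Λ, P p := by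
      have hca := (hfd₀.smul_of_comm a).ae_covers
      have hcb := (hfd₀.smul_of_comm b).ae_covers
      rw [Filter.eventuallyEq_set]
      filter_upwards [hca, hcb] with ω hha hhb
      constructor
      · intro hω
        obtain ⟨s, hs⟩ := hha
        obtain ⟨t, ht⟩ := hhb
        refine Set.mem_iUnion.mpr ⟨(s⁻¹, t⁻¹), ⟨hω, ?_⟩, ?_⟩
        · rw [smul_comm a s⁻¹ Y₀, Set.mem_smul_set_iff_inv_smul_mem, inv_inv]
          exact hs
        · rw [smul_comm b t⁻¹ Y₀, Set.mem_smul_set_iff_inv_smul_mem, inv_inv]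
          exact ht
      · intro hω
        obtain ⟨p, hp⟩ := Set.mem_iUnion.mp hω
        exact hp.1.1
    have hdisjP : Pairwise (Function.onFun (MeasureTheory.AEDisjoint m) P) := by
      intro p q hpq
      have hne : p.1 ≠ q.1 ∨ p.2 ≠ q.2 := by
        by_contra h
        push_neg at h
        exact hpq (Prod.ext h.1 h.2)
      cases hne with
      | inl h =>
        refine measure_mono_null (fun x hx => ?_) ((hfd₀.smul_of_comm a).aedisjoint h)
        have h1 := hx.1.1.2
        have h2 := hx.2.1.2
        rw [smul_comm a p.1 Y₀] at h1
        rw [smul_comm a q.1 Y₀] at h2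
        exact ⟨h1, h2⟩
      | inr h =>
        refine measure_mono_null (fun x hx => ?_) ((hfd₀.smul_of_comm b).aedisjoint h)
        have h1 := hx.1.2
        have h2 := hx.2.2
        rw [smul_comm b p.2 Y₀] at h1
        rw [smul_comm b q.2 Y₀] at h2
        exact ⟨h1, h2⟩
    set F : Ω → ℂ := fun ω => (inner ℂ (Gf η b (χ ω)) (Gf ξ a (χ ω)) : ℂ) with hF
    haveI : IsFiniteMeasure (m.restrict Y₀) :=
      ⟨by rw [Measure.restrict_apply_univ]; exact hY₀fin.lt_top⟩
    have hFint : IntegrableOn F Y₀ m := by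
      have hFsm : StronglyMeasurable F := hsm2.comp_measurable hχmeas
      exact memLp_one_iff_integrable.mp
        (MemLp.of_bound hFsm.aestronglyMeasurable (B * A)
          (Filter.Eventually.of_forall fun ω => (norm_inner_le_norm _ _).trans
            (mul_le_mul (hB _) (hA _) (norm_nonneg _) hB0)))
    have hpiece : ∀ p : Λ × Λ,
        ∫ ω in P p, F ω ∂m = u (p.2⁻¹ * p.1) * ((m (P p)).toReal : ℂ) := by
      rintro ⟨s, t⟩
      have hae : ∀ᵐ ω ∂m, ω ∈ P (s, t) → F ω = u (t⁻¹ * s) := by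
        filter_upwards [hχprop a s, hχprop b t] with ω e1 e2 hω
        have f1 : χ ω (eΓ a) = eΛ s := e1 hω.1.2
        have f2 : χ ω (eΓ b) = eΛ t := e2 hω.2
        simp only [hF, hGf, f1, f2, hdecΛ]
        exact (hu s t).symm
      rw [setIntegral_congr_ae (hPmeas (s, t)) hae, setIntegral_const, Complex.real_smul,
        mul_comm, measureReal_def]
    have hIunion : IntegrableOn F (⋃ p : Λ × Λ, P p) m :=
      hFint.mono_set (Set.iUnion_subset hPsub)
    have hdecomp : ∫ ω in Y₀, F ω ∂m
        = ∑' p : Λ × Λ, u (p.2⁻¹ * p.1) * ((m (P p)).toReal : ℂ) := by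
      rw [setIntegral_congr_set hcov,
        integral_iUnion_ae (fun p => (hPmeas p).nullMeasurableSet) hdisjP hIunion]
      exact tsum_congr hpiece
    -- identify the measures of the pieces with the `Y`-versions
    have hPY : ∀ p : Λ × Λ,
        m (P p) = m ((Y ∩ (a • (p.1 • Y) : Set Ω)) ∩ (b • (p.2 • Y) : Set Ω)) := fun p =>
      measure_congr
        (MeasureTheory.ae_eq_set_inter
          (MeasureTheory.ae_eq_set_inter hY₀ae (smul_set_ae_eq a (smul_set_ae_eq p.1 hY₀ae)))
          (smul_set_ae_eq b (smul_set_ae_eq p.2 hY₀ae)))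
    set w : Λ × Λ → ℝ≥0∞ :=
      fun p => m ((Y ∩ (a • (p.1 • Y) : Set Ω)) ∩ (b • (p.2 • Y) : Set Ω)) with hw
    have hwle : ∀ p, w p ≤ m Y := fun p => measure_mono fun x hx => hx.1.1
    have hwfin : ∀ p, w p ≠ ⊤ := fun p => ((hwle p).trans_lt hYfin.lt_top).ne
    have huB : ∀ r : Λ, ‖u r‖ ≤ B * A := by
      intro r
      have h := hu r 1
      rw [inv_one, one_mul] at h
      rw [h]
      exact (norm_inner_le_norm _ _).trans
        (mul_le_mul (hB _) (hA _) (norm_nonneg _) hB0)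
    set f0 : Λ × Λ → ℂ := fun p => u (p.2⁻¹ * p.1) * ((w p).toReal : ℂ) with hf0
    have hf0norm : ∀ p, ‖f0 p‖ ≤ B * A * (w p).toReal := by
      intro p
      simp only [hf0]
      calc ‖u (p.2⁻¹ * p.1) * ((w p).toReal : ℂ)‖
          = ‖u (p.2⁻¹ * p.1)‖ * (w p).toReal := by
            rw [norm_mul, Complex.norm_real, Real.norm_of_nonneg ENNReal.toReal_nonneg]
        _ ≤ B * A * (w p).toReal :=
            mul_le_mul_of_nonneg_right (huB _) ENNReal.toReal_nonneg
    have hwtot : ∑' p : Λ × Λ, w p = m Y := by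
      rw [ENNReal.tsum_prod']
      have hinner : ∀ s : Λ, ∑' t : Λ, w (s, t) = m (Y ∩ (a • (s • Y) : Set Ω)) := by
        intro s
        have h := (hY.smul_of_comm b).measure_eq_tsum' (Y ∩ (a • (s • Y) : Set Ω))
        rw [h]
        refine tsum_congr fun t => ?_
        simp only [hw]
        rw [smul_comm b t Y]
      rw [tsum_congr hinner]
      have h := (hY.smul_of_comm a).measure_eq_tsum' Y
      rw [show ∑' s : Λ, m (Y ∩ (a • (s • Y) : Set Ω))
          = ∑' s : Λ, m (Y ∩ (s • (a • Y) : Set Ω)) from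
        tsum_congr fun s => by rw [smul_comm a s Y], ← h]
    have hwsum : Summable fun p : Λ × Λ => (w p).toReal :=
      ENNReal.summable_toReal (by rw [hwtot]; exact hYfin)
    have hf0sum : Summable f0 :=
      Summable.of_norm (Summable.of_nonneg_of_le (fun p => norm_nonneg _) hf0norm
        (hwsum.mul_left (B * A)))
    set e : Λ × Λ ≃ Λ × Λ :=
      ⟨fun q => (q.2 * q.1, q.2), fun p => (p.2⁻¹ * p.1, p.2),
        fun q => by simp, fun p => by simp⟩ with he
    have hterm : ∀ q : Λ × Λ, f0 (e q) = u q.1 * ((w (q.2 * q.1, q.2)).toReal : ℂ) := by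
      rintro ⟨r, t⟩
      simp only [hf0, he, Equiv.coe_fn_mk, inv_mul_cancel_left]
    have hwfib : ∀ r : Λ, ∑' t : Λ, w (t * r, t) = m (((b⁻¹ * a) • (r • Y) : Set Ω) ∩ Y) := by
      intro r
      have h := tsum_measure_piece (m := m) hY a b r
      refine (tsum_congr fun t => ?_).trans h
      simp only [hw]
    have hglob : Summable fun q : Λ × Λ => f0 (e q) := e.summable_iff.mpr hf0sum
    have hfib : ∀ r : Λ, Summable fun t : Λ => f0 (e (r, t)) := by
      intro r
      apply Summable.of_norm
      have hs : Summable fun t : Λ => (w (t * r, t)).toReal :=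
        ENNReal.summable_toReal (by
          rw [hwfib r]
          exact ((measure_mono Set.inter_subset_right).trans_lt hYfin.lt_top).ne)
      refine Summable.of_nonneg_of_le (fun t => norm_nonneg _) (fun t => ?_)
        (hs.mul_left (B * A))
      exact hf0norm (t * r, t)
    have hprod : ∑' q : Λ × Λ, f0 (e q) = ∑' r : Λ, ∑' t : Λ, f0 (e (r, t)) :=
      hglob.tsum_prod' hfib
    have hinner2 : ∀ r : Λ,
        ∑' t : Λ, f0 (e (r, t))
          = u r * ((m (((b⁻¹ * a) • (r • Y) : Set Ω) ∩ Y)).toReal : ℂ) := by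
      intro r
      calc ∑' t : Λ, f0 (e (r, t)) = ∑' t : Λ, u r * ((w (t * r, t)).toReal : ℂ) :=
            tsum_congr fun t => hterm (r, t)
        _ = u r * ∑' t : Λ, ((w (t * r, t)).toReal : ℂ) := tsum_mul_left
        _ = u r * ((m (((b⁻¹ * a) • (r • Y) : Set Ω) ∩ Y)).toReal : ℂ) := by
            rw [← Complex.ofReal_tsum, ← ENNReal.tsum_toReal_eq (fun t => hwfin _), hwfib r]
    rw [h1, h2, hdecomp]
    have hsum_eq : ∑' p : Λ × Λ, u (p.2⁻¹ * p.1) * ((m (P p)).toReal : ℂ)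
        = ∑' r : Λ, u r * ((m (((b⁻¹ * a) • (r • Y) : Set Ω) ∩ Y)).toReal : ℂ) := by
      calc ∑' p : Λ × Λ, u (p.2⁻¹ * p.1) * ((m (P p)).toReal : ℂ)
          = ∑' p : Λ × Λ, f0 p := tsum_congr fun p => by
              simp only [hf0, hw]
              rw [hPY p]
        _ = ∑' q : Λ × Λ, f0 (e q) := (e.tsum_eq f0).symm
        _ = ∑' r : Λ, ∑' t : Λ, f0 (e (r, t)) := hprod
        _ = ∑' r : Λ, u r * ((m (((b⁻¹ * a) • (r • Y) : Set Ω) ∩ Y)).toReal : ℂ) :=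
            tsum_congr hinner2
    rw [hsum_eq, hmY₀, Complex.real_smul]
    simp only [inducedMultiplier]
  exact ⟨Lp H₀ 2 μ', inferInstance, inferInstance, ξh, ηh, A, B,
    fun γ => hnorm ξ A hA0 hA γ (hmemξ γ), fun γ => hnorm η B hB0 hB γ (hmemη γ), hCAB,
    fun s t => (hkey s t).symm⟩

end Induction

/-- The pre-adjoint of the induction map, sending `ℓ¹(Γ)` to `ℓ¹(Λ)`. -/
noncomputable def adjMap {Ω : Type*} [MeasurableSpace Ω] (m : Measure Ω)
    {Γ Λ : Type*} [Group Γ] [Group Λ] [MulAction Γ Ω] [MulAction Λ Ω]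
    (Y : Set Ω) (g : Γ → ℂ) (s : Λ) : ℂ :=
  ((m Y).toReal)⁻¹ * ∑' γ : Γ, g γ * ((m ((γ • (s • Y)) ∩ Y)).toReal : ℂ)

section Adjoint

variable {Ω : Type*} [MeasurableSpace Ω] {m : Measure Ω}
  {Γ Λ : Type*} [Group Γ] [Countable Γ] [Group Λ] [Countable Λ]
  [MulAction Γ Ω] [MulAction Λ Ω]
  [MeasurableSpace Γ] [MeasurableSpace Λ]
  [MeasurableSMul Γ Ω] [MeasurableSMul Λ Ω]
  [SMulInvariantMeasure Γ Ω m] [SMulInvariantMeasure Λ Ω m]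
  [SMulCommClass Γ Λ Ω] [SMulCommClass Λ Γ Ω]
  {Y : Set Ω}

lemma summable_double (hY : IsFundamentalDomain Λ Y m) (hYfin : m Y ≠ ⊤)
    {g : Γ → ℂ} (hg : Summable fun γ => ‖g γ‖) {c : ℝ} (hc : 0 ≤ c) :
    Summable fun p : Γ × Λ => c * ‖g p.1‖ * (m ((p.1 • (p.2 • Y)) ∩ Y)).toReal := by
  apply (summable_prod_of_nonneg ?_).mpr
  · constructor
    · intro γ
      dsimp only
      exact (summable_wt hY hYfin γ).mul_left _
    · have h1 : ∀ γ : Γ, ∑' s : Λ, c * ‖g γ‖ * (m ((γ • (s • Y)) ∩ Y)).toReal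
          = c * ‖g γ‖ * (m Y).toReal := by
        intro γ
        rw [tsum_mul_left, tsum_wt hY hYfin γ]
      refine (((hg.mul_left c).mul_right ((m Y).toReal)).congr fun γ => ?_)
      dsimp only
      rw [← h1 γ]
  · intro p
    exact mul_nonneg (mul_nonneg hc (norm_nonneg _)) ENNReal.toReal_nonneg

lemma summable_g_w (hYfin : m Y ≠ ⊤) {g : Γ → ℂ} (hg : Summable fun γ => ‖g γ‖) (s : Λ) :
    Summable fun γ : Γ => g γ * ((m ((γ • (s • Y)) ∩ Y)).toReal : ℂ) := by
  apply Summable.of_norm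
  refine Summable.of_nonneg_of_le (fun γ => norm_nonneg _) (fun γ => ?_)
    (hg.mul_right ((m Y).toReal))
  rw [norm_mul, Complex.norm_real, Real.norm_of_nonneg ENNReal.toReal_nonneg]
  exact mul_le_mul_of_nonneg_left
    (ENNReal.toReal_mono hYfin (measure_mono Set.inter_subset_right)) (norm_nonneg _)

lemma tsum_induced_mul (hY : IsFundamentalDomain Λ Y m) (hYfin : m Y ≠ ⊤)
    {ψ : Λ → ℂ} {c : ℝ} (hψ : ∀ r, ‖ψ r‖ ≤ c)
    {g : Γ → ℂ} (hg : Summable fun γ => ‖g γ‖) :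
    ∑' γ : Γ, inducedMultiplier m Y ψ γ * g γ = ∑' s : Λ, ψ s * adjMap m Y g s := by
  have hc0 : 0 ≤ c := (norm_nonneg _).trans (hψ 1)
  set F : Γ × Λ → ℂ :=
    fun p => ψ p.2 * ((m ((p.1 • (p.2 • Y)) ∩ Y)).toReal : ℂ) * g p.1 with hF
  have hFnorm : ∀ p : Γ × Λ,
      ‖F p‖ ≤ c * ‖g p.1‖ * (m ((p.1 • (p.2 • Y)) ∩ Y)).toReal := by
    intro p
    simp only [hF]
    rw [norm_mul, norm_mul, Complex.norm_real, Real.norm_of_nonneg ENNReal.toReal_nonneg]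
    calc ‖ψ p.2‖ * (m ((p.1 • (p.2 • Y)) ∩ Y)).toReal * ‖g p.1‖
        ≤ c * (m ((p.1 • (p.2 • Y)) ∩ Y)).toReal * ‖g p.1‖ := by
          gcongr
          exact hψ _
      _ = c * ‖g p.1‖ * (m ((p.1 • (p.2 • Y)) ∩ Y)).toReal := by ring
  have hmaj := summable_double hY hYfin hg hc0
  have hFsum : Summable F :=
    Summable.of_norm (Summable.of_nonneg_of_le (fun p => norm_nonneg _) hFnorm hmaj)
  have hfib1 : ∀ γ : Γ, Summable fun s : Λ => F (γ, s) := by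
    intro γ
    apply Summable.of_norm
    exact Summable.of_nonneg_of_le (fun s => norm_nonneg _) (fun s => hFnorm (γ, s))
      (((summable_wt hY hYfin γ).mul_left (c * ‖g γ‖)).congr fun s => rfl)
  have hfib2 : ∀ s : Λ, Summable fun γ : Γ => F (γ, s) := by
    intro s
    apply Summable.of_norm
    refine Summable.of_nonneg_of_le (fun γ => norm_nonneg _) (fun γ => ?_)
      ((hg.mul_left c).mul_right ((m Y).toReal))
    refine (hFnorm (γ, s)).trans ?_
    rw [mul_assoc, mul_assoc]
    refine mul_le_mul_of_nonneg_left ?_ hc0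
    exact mul_le_mul_of_nonneg_left
      (ENNReal.toReal_mono hYfin (measure_mono Set.inter_subset_right)) (norm_nonneg _)
  have hL : ∑' γ : Γ, inducedMultiplier m Y ψ γ * g γ
      = ((((m Y).toReal)⁻¹ : ℝ) : ℂ) * ∑' p : Γ × Λ, F p := by
    rw [hFsum.tsum_prod' hfib1, ← tsum_mul_left]
    refine tsum_congr fun γ => ?_
    simp only [inducedMultiplier, hF]
    rw [mul_assoc]
    congr 1
    rw [← tsum_mul_right]
  have hR : ∑' s : Λ, ψ s * adjMap m Y g s
      = ((((m Y).toReal)⁻¹ : ℝ) : ℂ) * ∑' p : Γ × Λ, F p := by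
    have hswap : ∑' p : Γ × Λ, F p = ∑' q : Λ × Γ, F (q.2, q.1) :=
      ((Equiv.prodComm Λ Γ).tsum_eq F).symm
    have hglob : Summable fun q : Λ × Γ => F (q.2, q.1) :=
      (Equiv.prodComm Λ Γ).summable_iff.mpr hFsum
    rw [hswap, hglob.tsum_prod' (fun s => hfib2 s), ← tsum_mul_left]
    refine tsum_congr fun s => ?_
    simp only [adjMap, hF]
    rw [← mul_assoc, mul_comm (ψ s), mul_assoc]
    congr 1
    rw [← tsum_mul_left]
    exact tsum_congr fun γ => by ring
  rw [hL, hR]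

lemma summable_adjMap (hY : IsFundamentalDomain Λ Y m) (hYfin : m Y ≠ ⊤)
    {g : Γ → ℂ} (hg : Summable fun γ => ‖g γ‖) :
    Summable fun s : Λ => ‖adjMap m Y g s‖ := by
  have hmaj := summable_double hY hYfin hg (c := 1) zero_le_one
  have hswap : Summable fun q : Λ × Γ => 1 * ‖g q.2‖ * (m ((q.2 • (q.1 • Y)) ∩ Y)).toReal :=
    ((Equiv.prodComm Λ Γ).summable_iff.mpr hmaj).congr fun q => rfl
  have hpair := (summable_prod_of_nonneg (fun q =>
    mul_nonneg (mul_nonneg zero_le_one (norm_nonneg _)) ENNReal.toReal_nonneg)).mp hswap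
  refine Summable.of_nonneg_of_le (fun s => norm_nonneg _) (fun s => ?_)
    (hpair.2.mul_left (((m Y).toReal)⁻¹))
  have hns : Summable fun γ : Γ => ‖g γ * ((m ((γ • (s • Y)) ∩ Y)).toReal : ℂ)‖ := by
    refine (hpair.1 s).congr fun γ => ?_
    rw [norm_mul, Complex.norm_real, Real.norm_of_nonneg ENNReal.toReal_nonneg, one_mul]
  have hbound : ‖adjMap m Y g s‖
      ≤ ((m Y).toReal)⁻¹ * ∑' γ : Γ, 1 * ‖g γ‖ * (m ((γ • (s • Y)) ∩ Y)).toReal := by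
    simp only [adjMap]
    rw [norm_mul, Complex.norm_real,
      Real.norm_of_nonneg (inv_nonneg.mpr ENNReal.toReal_nonneg)]
    refine mul_le_mul_of_nonneg_left ?_ (inv_nonneg.mpr ENNReal.toReal_nonneg)
    refine (norm_tsum_le_tsum_norm hns).trans (le_of_eq ?_)
    refine tsum_congr fun γ => ?_
    rw [norm_mul, Complex.norm_real, Real.norm_of_nonneg ENNReal.toReal_nonneg, one_mul]
  exact hbound
lemma adjMap_sub (hYfin : m Y ≠ ⊤) {g g' : Γ → ℂ}
    (hg : Summable fun γ => ‖g γ‖) (hg' : Summable fun γ => ‖g' γ‖) (s : Λ) :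
    adjMap m Y (fun γ => g γ - g' γ) s = adjMap m Y g s - adjMap m Y g' s := by
  simp only [adjMap]
  rw [← mul_sub]
  congr 1
  rw [← Summable.tsum_sub (summable_g_w hYfin hg s) (summable_g_w hYfin hg' s)]
  exact tsum_congr fun γ => sub_mul _ _ _

lemma qnorm_adjMap_le (hY : IsFundamentalDomain Λ Y m) (hYpos : m Y ≠ 0) (hYfin : m Y ≠ ⊤)
    {g : Γ → ℂ} (hg : Summable fun γ => ‖g γ‖) :
    QNorm (fun s : Λ => adjMap m Y g s) ≤ QNorm g := by
  refine QNorm_le ?_ (QNorm_nonneg hg)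
  rintro r ⟨u, ⟨bb, hbb, hbb1⟩, rfl⟩
  obtain ⟨hbb0, hub⟩ := B2BoundSet.norm_le hbb
  have hfub := tsum_induced_mul hY hYfin (ψ := u) (c := bb) hub hg
  have heq : ∑' s : Λ, adjMap m Y g s * u s = ∑' γ : Γ, g γ * inducedMultiplier m Y u γ := by
    rw [tsum_congr fun s => mul_comm (adjMap m Y g s) (u s), ← hfub]
    exact tsum_congr fun γ => mul_comm _ _
  show ‖∑' s : Λ, adjMap m Y g s * u s‖ ≤ QNorm g
  rw [heq]
  exact le_QNorm hg ⟨fun γ => inducedMultiplier m Y u γ,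
    ⟨bb, induced_mem_B2BoundSet hY hYpos hYfin hbb, hbb1⟩, rfl⟩

end Adjoint

theorem inducedMultiplier_weakStar_continuous
    {Ω : Type*} [MeasurableSpace Ω] (m : Measure Ω) [SigmaFinite m]
    {Γ Λ : Type*} [Group Γ] [Countable Γ] [Group Λ] [Countable Λ]
    [MulAction Γ Ω] [MulAction Λ Ω]
    (hΓ : ∀ γ : Γ, MeasurePreserving (fun ω => γ • ω) m m)
    (hΛ : ∀ s : Λ, MeasurePreserving (fun ω => s • ω) m m)
    (hcomm : ∀ (γ : Γ) (s : Λ) (ω : Ω), γ • s • ω = s • γ • ω)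
    (Y : Set Ω) (hY : IsFundamentalDomain Λ Y m)
    (hYpos : 0 < m Y) (hYfin : m Y < ⊤)
    {ι : Type*} (l : Filter ι) (φnet : ι → Λ → ℂ) (φ : Λ → ℂ)
    (hHSnet : ∀ i, IsHerzSchurMultiplier (φnet i)) (hHS : IsHerzSchurMultiplier φ)
    (hconv : TendstoSigmaB2Q l φnet φ) :
    TendstoSigmaB2Q l (fun i => (inducedMultiplier m Y (φnet i) : Γ → ℂ))
      (inducedMultiplier m Y φ : Γ → ℂ) := by
  letI : MeasurableSpace Γ := ⊤
  letI : MeasurableSpace Λ := ⊤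
  haveI : MeasurableSMul Γ Ω := { measurable_const_smul := fun c => (hΓ c).measurable, measurable_smul_const := fun _ => measurable_from_top }
  haveI : MeasurableSMul Λ Ω := { measurable_const_smul := fun c => (hΛ c).measurable, measurable_smul_const := fun _ => measurable_from_top }
  haveI : SMulInvariantMeasure Γ Ω m :=
    ⟨fun c S hS => (hΓ c).measure_preimage hS.nullMeasurableSet⟩
  haveI : SMulInvariantMeasure Λ Ω m :=
    ⟨fun c S hS => (hΛ c).measure_preimage hS.nullMeasurableSet⟩
  haveI : SMulCommClass Γ Λ Ω := ⟨hcomm⟩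
  haveI : SMulCommClass Λ Γ Ω := ⟨fun s γ ω => (hcomm γ s ω).symm⟩
  have hYpos' : m Y ≠ 0 := hYpos.ne'
  have hYfin' : m Y ≠ ⊤ := hYfin.ne
  intro f hf b b₀ hb hb₀
  have hfn : ∀ n, Summable fun γ : Γ => ‖f n γ‖ := hf.1
  have hQc : QCauchy fun n => (fun s : Λ => adjMap m Y (f n) s) := by
    constructor
    · exact fun n => summable_adjMap hY hYfin' (hfn n)
    · intro ε hε
      obtain ⟨N, hN⟩ := hf.2 ε hε
      refine ⟨N, fun p hp q hq => ?_⟩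
      have hsub : Summable fun γ : Γ => ‖f p γ - f q γ‖ :=
        Summable.of_nonneg_of_le (fun γ => norm_nonneg _) (fun γ => norm_sub_le _ _)
          ((hfn p).add (hfn q))
      have heq : (fun s : Λ => adjMap m Y (f p) s - adjMap m Y (f q) s)
          = fun s : Λ => adjMap m Y (fun γ => f p γ - f q γ) s := by
        funext s
        rw [adjMap_sub hYfin' (hfn p) (hfn q) s]
      calc QNorm (fun s : Λ => adjMap m Y (f p) s - adjMap m Y (f q) s)
          = QNorm (fun s : Λ => adjMap m Y (fun γ => f p γ - f q γ) s) := by rw [heq]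
        _ ≤ QNorm (fun γ => f p γ - f q γ) := qnorm_adjMap_le hY hYpos' hYfin' hsub
        _ < ε := hN p hp q hq
  have hbdd : ∀ ψ : Λ → ℂ, IsHerzSchurMultiplier ψ → ∃ c : ℝ, ∀ r, ‖ψ r‖ ≤ c := by
    rintro ψ ⟨c, hc⟩
    exact ⟨c, (B2BoundSet.norm_le hc).2⟩
  have hb' : ∀ i, Tendsto (fun n => ∑' s : Λ, φnet i s * adjMap m Y (f n) s)
      atTop (nhds (b i)) := by
    intro i
    obtain ⟨ci, hci⟩ := hbdd (φnet i) (hHSnet i)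
    exact (hb i).congr fun n => tsum_induced_mul hY hYfin' hci (hfn n)
  have hb₀' : Tendsto (fun n => ∑' s : Λ, φ s * adjMap m Y (f n) s) atTop (nhds b₀) := by
    obtain ⟨c₀, hc₀⟩ := hbdd φ hHS
    exact hb₀.congr fun n => tsum_induced_mul hY hYfin' hc₀ (hfn n)
  exact hconv (fun n => fun s : Λ => adjMap m Y (f n) s) hQc b b₀ hb' hb₀'
end
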